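/- arXiv:1711.11549 — 5 statements merged into one kernel-verified Lean document; each statement's English description precedes it below -/
import Mathlib

section
/- Let F and G be Young functions and suppose there exist t₀ > 0 and c > 0 such that F(t) ≤ G(c·t) for all 0 ≤ t ≤ t₀. Let L ≥ 0 and let f be a measurable function on (0,∞) with non-increasing rearrangement f*. If 0 < f*(L) < ∞, then the Luxemburg norm of f* over (L,∞) in L^F satisfies ‖f*‖_{L^F(L,∞)} ≤ max{ f*(L)/t₀ , c·‖f*‖_{L^G(L,∞)} }. -/
open MeasureTheory Set
open scoped ENNReal NNReal

noncomputable section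

/-- The non-increasing rearrangement of `f` with respect to the measure `μ`:
`f*(s) = inf { t : μ {x | f x > t} ≤ s }`. -/
def rearr {α : Type*} [MeasurableSpace α] (μ : Measure α) (f : α → ℝ≥0∞) (s : ℝ) : ℝ≥0∞ :=
  sInf {t : ℝ≥0∞ | μ {x | t < f x} ≤ ENNReal.ofReal s}
/-- A Young function: convex, non-decreasing, left-continuous, vanishing at `0`,
not identically `0` nor identically `∞` on `(0,∞)`. -/
structure YoungFunction where
  toFun : ℝ≥0∞ → ℝ≥0∞
  zero' : toFun 0 = 0
  mono' : Monotone toFun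
  convex' : ∀ (a b : ℝ≥0∞) (θ : ℝ), 0 ≤ θ → θ ≤ 1 →
    toFun (ENNReal.ofReal θ * a + ENNReal.ofReal (1 - θ) * b) ≤
      ENNReal.ofReal θ * toFun a + ENNReal.ofReal (1 - θ) * toFun b
  leftCont' : ∀ t : ℝ≥0∞, t ≠ 0 → toFun t = ⨆ s : {s : ℝ≥0∞ // s < t}, toFun s.1
  nontrivial_ne_zero' : ∃ t : ℝ≥0∞, 0 < t ∧ t ≠ ⊤ ∧ toFun t ≠ 0
  nontrivial_ne_top' : ∃ t : ℝ≥0∞, 0 < t ∧ toFun t ≠ ⊤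

/-- The Luxemburg norm of `h : ℝ → ℝ≥0∞` over the set `I ⊆ ℝ` associated with
the Young function `A`. -/
def luxNorm (A : YoungFunction) (I : Set ℝ) (h : ℝ → ℝ≥0∞) : ℝ≥0∞ :=
  sInf {l : ℝ≥0∞ | 0 < l ∧ ∫⁻ s in I, A.toFun (h s / l) ≤ 1}

/-- If `F(t) ≤ G(ct)` for `0 ≤ t ≤ t₀`, `L ≥ 0` and `f` is measurable
on `(0,∞)` with `0 < f*(L) < ∞`, then
`‖f*‖_{L^F(L,∞)} ≤ max { f*(L)/t₀ , c ‖f*‖_{L^G(L,∞)} }`. -/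
theorem luxNorm_rearrangement_tail_le (F G : YoungFunction) (t₀ c : ℝ)
    (ht₀ : 0 < t₀) (hc : 0 < c)
    (hFG : ∀ t : ℝ≥0∞, t ≤ ENNReal.ofReal t₀ → F.toFun t ≤ G.toFun (ENNReal.ofReal c * t))
    (L : ℝ) (hL : 0 ≤ L) (f : ℝ → ℝ) (hmeas : Measurable f)
    (hpos : 0 < rearr (volume.restrict (Set.Ioi (0:ℝ)))
      (fun x => ENNReal.ofReal |f x|) L)
    (hfin : rearr (volume.restrict (Set.Ioi (0:ℝ)))
      (fun x => ENNReal.ofReal |f x|) L ≠ ⊤) :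
    luxNorm F (Set.Ioi L)
        (rearr (volume.restrict (Set.Ioi (0:ℝ))) (fun x => ENNReal.ofReal |f x|)) ≤
      max (rearr (volume.restrict (Set.Ioi (0:ℝ))) (fun x => ENNReal.ofReal |f x|) L /
            ENNReal.ofReal t₀)
        (ENNReal.ofReal c *
          luxNorm G (Set.Ioi L)
            (rearr (volume.restrict (Set.Ioi (0:ℝ))) (fun x => ENNReal.ofReal |f x|))) := by
  set h := rearr (volume.restrict (Set.Ioi (0:ℝ))) (fun x => ENNReal.ofReal |f x|) with hh
  have hanti : Antitone h := by
    intro a b hab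
    exact sInf_le_sInf (fun t ht => le_trans ht (ENNReal.ofReal_le_ofReal hab))
  have ht0ne : ENNReal.ofReal t₀ ≠ 0 := by
    simp [ENNReal.ofReal_eq_zero, not_le, ht₀]
  have hcne : ENNReal.ofReal c ≠ 0 := by
    simp [ENNReal.ofReal_eq_zero, not_le, hc]
  refine le_of_forall_gt_imp_ge_of_dense fun lam hlam => ?_
  rcases eq_or_ne lam ⊤ with rfl | hlamtop
  · exact le_top
  have hlam0 : lam ≠ 0 := by
    have : (0:ℝ≥0∞) < h L / ENNReal.ofReal t₀ :=
      ENNReal.div_pos hpos.ne' ENNReal.ofReal_ne_top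
    exact (lt_of_lt_of_le this ((le_max_left _ _).trans hlam.le)).ne'
  rw [max_lt_iff] at hlam
  obtain ⟨hlam1, hlam2⟩ := hlam
  -- h L ≤ lam * t₀
  have hLbound : h L ≤ lam * ENNReal.ofReal t₀ :=
    ((ENNReal.div_lt_iff (Or.inl ht0ne) (Or.inl ENNReal.ofReal_ne_top)).mp hlam1).le
  -- pick μ in the G-set
  have hGlt : luxNorm G (Set.Ioi L) h < lam / ENNReal.ofReal c :=
    (ENNReal.lt_div_iff_mul_lt (Or.inl hcne) (Or.inl ENNReal.ofReal_ne_top)).mpr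
      (by rwa [mul_comm])
  obtain ⟨μ, hμmem, hμlt⟩ := sInf_lt_iff.mp hGlt
  obtain ⟨hμ0, hμint⟩ := hμmem
  have hμc : ENNReal.ofReal c * μ ≤ lam := by
    have := (ENNReal.lt_div_iff_mul_lt (Or.inl hcne) (Or.inl ENNReal.ofReal_ne_top)).mp hμlt
    rw [mul_comm]; exact this.le
  refine sInf_le ⟨zero_lt_iff.mpr hlam0, ?_⟩
  have hpt : ∀ s ∈ Set.Ioi L, F.toFun (h s / lam) ≤ G.toFun (h s / μ) := by
    intro s hs
    have hhs : h s ≤ h L := hanti (le_of_lt hs)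
    have h1 : h s / lam ≤ ENNReal.ofReal t₀ := by
      rw [ENNReal.div_le_iff hlam0 hlamtop, mul_comm]
      exact hhs.trans hLbound
    refine (hFG _ h1).trans (G.mono' ?_)
    have : ENNReal.ofReal c * (h s / lam) = h s * (ENNReal.ofReal c / lam) := by
      rw [mul_comm, div_eq_mul_inv, div_eq_mul_inv, mul_assoc]; ring_nf
    rw [this, div_eq_mul_inv]
    refine mul_le_mul_right ?_ _
    rw [ENNReal.mul_inv_le_iff hlam0 hlamtop, mul_comm μ⁻¹ lam,
      ← div_eq_mul_inv, ENNReal.le_div_iff_mul_le (Or.inl hμ0.ne') (Or.inr hlamtop), mul_comm]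
    rwa [mul_comm] at hμc
  calc ∫⁻ s in Set.Ioi L, F.toFun (h s / lam)
      ≤ ∫⁻ s in Set.Ioi L, G.toFun (h s / μ) := by
        exact setLIntegral_mono' measurableSet_Ioi hpt
    _ ≤ 1 := hμint
end
end

section
/- Let F and G be Young functions such that F dominates G near infinity (i.e., there exist c, t₀ > 0 with G(t) ≤ F(c t) for t > t₀), and assume that the function H defined by H(t) = G(t) for t ∈ [0,1] and H(t) = F(t) for t > 1 is itself a Young function. Then for every measurable f on (0,∞): ‖f*‖_{L^F(0,1)} + ‖f*‖_{L^G(0,∞)} is finite if and only if ‖f*‖_{L^H(0,∞)} is finite, and the two quantities are equivalent up to multiplicative constants independent of f. -/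
open MeasureTheory Set
open scoped ENNReal NNReal

noncomputable section

/-!
Both directions are comparisons of Luxemburg norms through pointwise inequalities between the
Young functions. Away from `0`, `G` is dominated by `F`, so `G (y / b) ≤ H y` for a fixed `b`;
and `F` is small near `0`, so `F (y / K) ≤ 1/2 + H y`, which costs only a factor `2` on `(0, 1)`,
a set of measure one. Conversely `H ≤ F + G`, and since `f*` is non-increasing,
`∫₀¹ G (f* / λ) ≤ 1` bounds `f* (1)` by a multiple of `λ`: on `[1, ∞)` the argument of `H` then
stays in `[0, 1]`, where `H = G`.
-/

theorem ENNReal.div_mul_eq_div_div_of_ne {k : ℝ≥0∞} (hk₀ : k ≠ 0) (hk : k ≠ ⊤)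
    (x l : ℝ≥0∞) : x / (k * l) = x / l / k := by
  rw [div_eq_mul_inv, div_eq_mul_inv, div_eq_mul_inv, ENNReal.mul_inv (.inl hk₀) (.inl hk)]
  ring

namespace YoungFunction

variable (A : YoungFunction)

theorem map_mul_le {k : ℝ≥0∞} (hk : k ≤ 1) (a : ℝ≥0∞) : A.toFun (k * a) ≤ k * A.toFun a := by
  have hk' : k ≠ ⊤ := ne_top_of_le_ne_top ENNReal.one_ne_top hk
  simpa [ENNReal.ofReal_toReal hk', A.zero'] using A.convex' a 0 k.toReal ENNReal.toReal_nonneg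
    (ENNReal.toReal_le_of_le_ofReal zero_le_one (by simpa using hk))

theorem mul_le_map_mul {k : ℝ≥0∞} (hk : 1 ≤ k) (hk' : k ≠ ⊤) (a : ℝ≥0∞) :
    k * A.toFun a ≤ A.toFun (k * a) := by
  have hk₀ : k ≠ 0 := (zero_lt_one.trans_le hk).ne'
  calc k * A.toFun a = k * A.toFun (k⁻¹ * (k * a)) := by
        rw [← mul_assoc, ENNReal.inv_mul_cancel hk₀ hk', one_mul]
    _ ≤ k * (k⁻¹ * A.toFun (k * a)) :=
        mul_le_mul_right (A.map_mul_le (ENNReal.inv_le_one.2 hk) _) _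
    _ = A.toFun (k * a) := by rw [← mul_assoc, ENNReal.mul_inv_cancel hk₀ hk', one_mul]

theorem map_div_le {k l m : ℝ≥0∞} (hk : 1 ≤ k) (hk' : k ≠ ⊤) (hm : k * l ≤ m) (x : ℝ≥0∞) :
    A.toFun (x / m) ≤ k⁻¹ * A.toFun (x / l) := by
  have hk₀ : k ≠ 0 := (zero_lt_one.trans_le hk).ne'
  calc A.toFun (x / m) ≤ A.toFun (k⁻¹ * (x / l)) := by
        refine A.mono' ?_
        rw [mul_comm, ← div_eq_mul_inv, ← ENNReal.div_mul_eq_div_div_of_ne hk₀ hk']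
        exact ENNReal.div_le_div_left hm x
    _ ≤ k⁻¹ * A.toFun (x / l) := A.map_mul_le (ENNReal.inv_le_one.2 hk) _

theorem exists_le_of_map_le_one : ∃ R, R ≠ ⊤ ∧ ∀ x, A.toFun x ≤ 1 → x ≤ R := by
  obtain ⟨t, -, ht, hAt⟩ := A.nontrivial_ne_zero'
  obtain ⟨n, hn⟩ := ENNReal.exists_nat_mul_gt hAt ENNReal.one_ne_top
  have hn₁ : (1 : ℝ≥0∞) ≤ n := by
    rcases n with _ | n
    · simp at hn
    · exact_mod_cast Nat.le_add_left 1 n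
  refine ⟨n * t, ENNReal.mul_ne_top (ENNReal.natCast_ne_top n) ht, fun x hx => ?_⟩
  by_contra! hlt
  refine hx.not_gt ?_
  calc 1 < n * A.toFun t := hn
    _ ≤ A.toFun (n * t) := A.mul_le_map_mul hn₁ (ENNReal.natCast_ne_top n) t
    _ ≤ A.toFun x := A.mono' hlt.le

theorem exists_pos_map_le_inv_two : ∃ δ, 0 < δ ∧ A.toFun δ ≤ 2⁻¹ := by
  obtain ⟨t, ht, hAt⟩ := A.nontrivial_ne_top'
  obtain ⟨k, hk, hkA⟩ := ENNReal.exists_pos_mul_lt hAt (b := 2⁻¹) (by simp)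
  refine ⟨min k 1 * t, ENNReal.mul_pos (lt_min hk one_pos).ne' ht.ne', ?_⟩
  calc A.toFun (min k 1 * t) ≤ min k 1 * A.toFun t := A.map_mul_le (min_le_right _ _) _
    _ ≤ k * A.toFun t := by gcongr; exact min_le_left _ _
    _ ≤ 2⁻¹ := hkA.le

theorem exists_map_div_le_inv_two_add {B : ℝ≥0∞ → ℝ≥0∞} (hAB : ∀ y, 1 < y → A.toFun y ≤ B y) :
    ∃ K, K ≠ 0 ∧ K ≠ ⊤ ∧ ∀ y, A.toFun (y / K) ≤ 2⁻¹ + B y := by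
  obtain ⟨δ, hδ, hAδ⟩ := A.exists_pos_map_le_inv_two
  have hK₁ : 1 ≤ max 1 δ⁻¹ := le_max_left _ _
  refine ⟨max 1 δ⁻¹, (zero_lt_one.trans_le hK₁).ne',
    max_ne_top ENNReal.one_ne_top (ENNReal.inv_ne_top.2 hδ.ne'), fun y => ?_⟩
  rcases le_or_gt y 1 with hy | hy
  · refine le_add_right ((A.mono' ?_).trans hAδ)
    calc y / max 1 δ⁻¹ ≤ 1 / δ⁻¹ := ENNReal.div_le_div hy (le_max_right _ _)
      _ = δ := by rw [one_div, inv_inv]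
  · have hyK : y / max 1 δ⁻¹ ≤ y := ENNReal.div_le_of_le_mul (le_mul_of_one_le_right' hK₁)
    exact le_add_left ((A.mono' hyK).trans (hAB y hy))

end YoungFunction

theorem exists_comp_div_le_of_dominates {F G B : ℝ≥0∞ → ℝ≥0∞} (hF : Monotone F)
    (hG : Monotone G) (hB : Monotone B) {c T : ℝ≥0∞} (hc : c ≠ ⊤) (hT : T ≠ ⊤)
    (hdom : ∀ t, T < t → G t ≤ F (c * t)) (hGB : ∀ y, y ≤ 1 → G y ≤ B y)
    (hFB : ∀ y, 1 < y → F y ≤ B y) :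
    ∃ b, b ≠ 0 ∧ b ≠ ⊤ ∧ ∀ y, G (y / b) ≤ B y := by
  set m := max T 1
  have hm₁ : 1 ≤ m := le_max_right _ _
  have hm : m ≠ ⊤ := max_ne_top hT ENNReal.one_ne_top
  set b := max 1 (c * m)
  have hb₁ : 1 ≤ b := le_max_left _ _
  refine ⟨b, (zero_lt_one.trans_le hb₁).ne',
    max_ne_top ENNReal.one_ne_top (ENNReal.mul_ne_top hc hm), fun y => ?_⟩
  have hy_le : y / b ≤ y := ENNReal.div_le_of_le_mul (le_mul_of_one_le_right' hb₁)
  rcases le_or_gt (y / b) 1 with hy | hy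
  · exact (hGB _ hy).trans (hB hy_le)
  · have hT_lt : T < m * (y / b) := calc
      T ≤ m * 1 := by rw [mul_one]; exact le_max_left _ _
      _ < m * (y / b) := ENNReal.mul_lt_mul_right (zero_lt_one.trans_le hm₁).ne' hm hy
    calc G (y / b) ≤ G (m * (y / b)) := hG (le_mul_of_one_le_left' hm₁)
      _ ≤ F (c * (m * (y / b))) := hdom _ hT_lt
      _ ≤ F (b * (y / b)) := hF <| by rw [← mul_assoc]; exact mul_le_mul_left (le_max_right _ _) _
      _ ≤ F y := hF ENNReal.mul_div_le
      _ ≤ B y := hFB y (hy.trans_le hy_le)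

theorem Antitone.ofReal_sub_mul_le_setLIntegral_Ioo {g : ℝ → ℝ≥0∞} (hg : Antitone g) (a b : ℝ) :
    ENNReal.ofReal (b - a) * g b ≤ ∫⁻ s in Ioo a b, g s := by
  rw [← Real.volume_Ioo, mul_comm, ← setLIntegral_const]
  exact setLIntegral_mono' measurableSet_Ioo fun s hs => hg hs.2.le

theorem rearr_antitone {α : Type*} [MeasurableSpace α] (μ : Measure α) (f : α → ℝ≥0∞) :
    Antitone (rearr μ f) := fun _ _ hst =>
  sInf_le_sInf fun _ ht => ht.trans (ENNReal.ofReal_le_ofReal hst)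

theorem luxNorm_le_of_lintegral_le_one {A : YoungFunction} {I : Set ℝ} {h : ℝ → ℝ≥0∞}
    {l : ℝ≥0∞} (hl : 0 < l) (hA : ∫⁻ s in I, A.toFun (h s / l) ≤ 1) : luxNorm A I h ≤ l :=
  sInf_le ⟨hl, hA⟩

theorem luxNorm_le_mul_of_forall {A B : YoungFunction} {I J : Set ℝ} {h : ℝ → ℝ≥0∞}
    {k : ℝ≥0∞} (hk₀ : k ≠ 0) (hk : k ≠ ⊤)
    (hAB : ∀ l, 0 < l → ∫⁻ s in I, B.toFun (h s / l) ≤ 1 →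
      ∫⁻ s in J, A.toFun (h s / (k * l)) ≤ 1) :
    luxNorm A J h ≤ k * luxNorm B I h := by
  rw [mul_comm, ← ENNReal.div_le_iff_le_mul (.inl hk₀) (.inl hk)]
  refine le_sInf fun l ⟨hl, hB⟩ => ?_
  rw [ENNReal.div_le_iff_le_mul (.inl hk₀) (.inl hk), mul_comm]
  exact luxNorm_le_of_lintegral_le_one (ENNReal.mul_pos hk₀ hl.ne') (hAB l hl hB)

theorem luxNorm_le_mul_add_of_forall {A B₁ B₂ : YoungFunction} {I J₁ J₂ : Set ℝ}
    {h : ℝ → ℝ≥0∞} {k : ℝ≥0∞} (hk₀ : k ≠ 0) (hk : k ≠ ⊤)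
    (hAB : ∀ l₁, 0 < l₁ → ∫⁻ s in J₁, B₁.toFun (h s / l₁) ≤ 1 →
      ∀ l₂, 0 < l₂ → ∫⁻ s in J₂, B₂.toFun (h s / l₂) ≤ 1 →
        ∫⁻ s in I, A.toFun (h s / (k * (l₁ + l₂))) ≤ 1) :
    luxNorm A I h ≤ k * (luxNorm B₁ J₁ h + luxNorm B₂ J₂ h) := by
  rw [mul_comm, ← ENNReal.div_le_iff_le_mul (.inl hk₀) (.inl hk)]
  conv_rhs => simp only [luxNorm, sInf_eq_iInf]
  refine ENNReal.le_iInf₂_add_iInf₂ fun l₁ ⟨hl₁, hB₁⟩ l₂ ⟨hl₂, hB₂⟩ => ?_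
  rw [ENNReal.div_le_iff_le_mul (.inl hk₀) (.inl hk), mul_comm]
  exact luxNorm_le_of_lintegral_le_one (ENNReal.mul_pos hk₀ (hl₁.trans_le le_self_add).ne')
    (hAB l₁ hl₁ hB₁ l₂ hl₂ hB₂)

theorem luxNorm_le_mul_of_map_div_le {A B : YoungFunction} {I J : Set ℝ} (hJI : J ⊆ I)
    {k : ℝ≥0∞} (hk₀ : k ≠ 0) (hk : k ≠ ⊤) (hAB : ∀ y, A.toFun (y / k) ≤ B.toFun y)
    (h : ℝ → ℝ≥0∞) : luxNorm A J h ≤ k * luxNorm B I h :=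
  luxNorm_le_mul_of_forall hk₀ hk fun l _ hB => calc
    ∫⁻ s in J, A.toFun (h s / (k * l)) ≤ ∫⁻ s in I, B.toFun (h s / l) := by
      simp_rw [ENNReal.div_mul_eq_div_div_of_ne hk₀ hk]
      exact (lintegral_mono fun s => hAB _).trans (lintegral_mono_set hJI)
    _ ≤ 1 := hB

theorem luxNorm_le_two_mul_of_map_div_le_inv_two_add {A B : YoungFunction} {I J : Set ℝ}
    (hJI : J ⊆ I) (hJ : volume J ≤ 1) {k : ℝ≥0∞} (hk₀ : k ≠ 0) (hk : k ≠ ⊤)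
    (hAB : ∀ y, A.toFun (y / k) ≤ 2⁻¹ + B.toFun y) (h : ℝ → ℝ≥0∞) :
    luxNorm A J h ≤ 2 * k * luxNorm B I h :=
  luxNorm_le_mul_of_forall (mul_ne_zero two_ne_zero hk₀)
    (ENNReal.mul_ne_top ENNReal.ofNat_ne_top hk)
    fun l _ hB => calc
    ∫⁻ s in J, A.toFun (h s / (2 * k * l)) ≤ ∫⁻ s in J, (2⁻¹ + 2⁻¹ * B.toFun (h s / l)) := by
      refine lintegral_mono fun s => ?_
      rw [mul_comm 2 k, mul_assoc, ENNReal.div_mul_eq_div_div_of_ne hk₀ hk]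
      exact (hAB _).trans
        (add_le_add le_rfl (B.map_div_le one_le_two ENNReal.ofNat_ne_top le_rfl _))
    _ = 2⁻¹ * volume J + 2⁻¹ * ∫⁻ s in J, B.toFun (h s / l) := by
      rw [lintegral_add_left measurable_const, setLIntegral_const,
        lintegral_const_mul' _ _ (ENNReal.inv_ne_top.2 two_ne_zero)]
    _ ≤ 2⁻¹ * 1 + 2⁻¹ * 1 := by
      gcongr
      exact (lintegral_mono_set hJI).trans hB
    _ = 1 := by rw [mul_one, ENNReal.inv_two_add_inv_two]

theorem exists_luxNorm_add_le_mul_luxNorm_glue {F G H : YoungFunction} {c T : ℝ≥0∞}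
    (hc : c ≠ ⊤) (hT : T ≠ ⊤) (hdom : ∀ t, T < t → G.toFun t ≤ F.toFun (c * t))
    (hH1 : ∀ t, t ≤ 1 → H.toFun t = G.toFun t) (hH2 : ∀ t, 1 < t → H.toFun t = F.toFun t) :
    ∃ C : ℝ≥0, ∀ h : ℝ → ℝ≥0∞,
      luxNorm F (Ioo 0 1) h + luxNorm G (Ioi 0) h ≤ C * luxNorm H (Ioi 0) h := by
  obtain ⟨K, hK₀, hK, hFH⟩ := F.exists_map_div_le_inv_two_add fun y hy => (hH2 y hy).ge
  obtain ⟨b, hb₀, hb, hGH⟩ := exists_comp_div_le_of_dominates F.mono' G.mono' H.mono' hc hT hdom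
    (fun y hy => (hH1 y hy).ge) (fun y hy => (hH2 y hy).ge)
  refine ⟨(2 * K + b).toNNReal, fun h => ?_⟩
  rw [ENNReal.coe_toNNReal (by finiteness), add_mul]
  exact add_le_add
    (luxNorm_le_two_mul_of_map_div_le_inv_two_add Ioo_subset_Ioi_self (by simp) hK₀ hK hFH h)
    (luxNorm_le_mul_of_map_div_le subset_rfl hb₀ hb hGH h)

theorem lintegral_glue_div_le_one {F G H : YoungFunction}
    (hH1 : ∀ t, t ≤ 1 → H.toFun t = G.toFun t) (hH2 : ∀ t, 1 < t → H.toFun t = F.toFun t)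
    {h : ℝ → ℝ≥0∞} (hh : Antitone h) {C l₁ l₂ : ℝ≥0∞} (hC : 2 ≤ C) (hh₁ : h 1 ≤ C * l₂)
    (hF : ∫⁻ s in Ioo 0 1, F.toFun (h s / l₁) ≤ 1) (hG : ∫⁻ s in Ioi 0, G.toFun (h s / l₂) ≤ 1) :
    ∫⁻ s in Ioi 0, H.toFun (h s / (C * (l₁ + l₂))) ≤ 1 := by
  have hF' : ∀ s, F.toFun (h s / (C * (l₁ + l₂))) ≤ 2⁻¹ * F.toFun (h s / l₁) := fun s =>
    F.map_div_le one_le_two ENNReal.ofNat_ne_top (mul_le_mul' hC le_self_add) _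
  have hG' : ∀ s, G.toFun (h s / (C * (l₁ + l₂))) ≤ 2⁻¹ * G.toFun (h s / l₂) := fun s =>
    G.map_div_le one_le_two ENNReal.ofNat_ne_top (mul_le_mul' hC le_add_self) _
  have hpt : ∀ s ∈ Ioi (0 : ℝ), H.toFun (h s / (C * (l₁ + l₂))) ≤
      (Ioo 0 1).indicator (fun s => 2⁻¹ * F.toFun (h s / l₁)) s + 2⁻¹ * G.toFun (h s / l₂) := by
    intro s hs
    rcases lt_or_ge s 1 with hs₁ | hs₁
    · rw [indicator_of_mem (show s ∈ Ioo 0 1 from ⟨hs, hs₁⟩)]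
      rcases le_or_gt (h s / (C * (l₁ + l₂))) 1 with hy | hy
      · rw [hH1 _ hy]; exact le_add_left (hG' s)
      · rw [hH2 _ hy]; exact le_add_right (hF' s)
    · have hy : h s / (C * (l₁ + l₂)) ≤ 1 := ENNReal.div_le_of_le_mul <| by
        rw [one_mul]; exact (hh hs₁).trans (hh₁.trans (mul_le_mul_right le_add_self C))
      rw [hH1 _ hy]
      exact le_add_left (hG' s)
  have hGh : Measurable fun s => 2⁻¹ * G.toFun (h s / l₂) :=
    (G.mono'.measurable.comp (hh.measurable.div_const l₂)).const_mul _
  calc ∫⁻ s in Ioi 0, H.toFun (h s / (C * (l₁ + l₂)))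
      ≤ ∫⁻ s in Ioi 0, ((Ioo 0 1).indicator (fun s => 2⁻¹ * F.toFun (h s / l₁)) s +
          2⁻¹ * G.toFun (h s / l₂)) := setLIntegral_mono' measurableSet_Ioi hpt
    _ = 2⁻¹ * (∫⁻ s in Ioo 0 1, F.toFun (h s / l₁)) + 2⁻¹ * ∫⁻ s in Ioi 0, G.toFun (h s / l₂) := by
      rw [lintegral_add_right _ hGh, lintegral_indicator measurableSet_Ioo,
        Measure.restrict_restrict measurableSet_Ioo, inter_eq_left.2 Ioo_subset_Ioi_self,
        lintegral_const_mul' _ _ (ENNReal.inv_ne_top.2 two_ne_zero),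
        lintegral_const_mul' _ _ (ENNReal.inv_ne_top.2 two_ne_zero)]
    _ ≤ 2⁻¹ * 1 + 2⁻¹ * 1 := by gcongr
    _ = 1 := by rw [mul_one, ENNReal.inv_two_add_inv_two]

theorem exists_luxNorm_glue_le_mul_add {F G H : YoungFunction}
    (hH1 : ∀ t, t ≤ 1 → H.toFun t = G.toFun t) (hH2 : ∀ t, 1 < t → H.toFun t = F.toFun t) :
    ∃ C : ℝ≥0, ∀ h : ℝ → ℝ≥0∞, Antitone h →
      luxNorm H (Ioi 0) h ≤ C * (luxNorm F (Ioo 0 1) h + luxNorm G (Ioi 0) h) := by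
  obtain ⟨R, hR, hGR⟩ := G.exists_le_of_map_le_one
  set C := max 2 R
  have hC₂ : 2 ≤ C := le_max_left _ _
  have hC₀ : C ≠ 0 := (two_pos.trans_le hC₂).ne'
  have hC : C ≠ ⊤ := max_ne_top ENNReal.ofNat_ne_top hR
  refine ⟨C.toNNReal, fun h hh => ?_⟩
  rw [ENNReal.coe_toNNReal hC]
  refine luxNorm_le_mul_add_of_forall hC₀ hC fun l₁ _ hF l₂ hl₂ hG => ?_
  refine lintegral_glue_div_le_one hH1 hH2 hh hC₂ ?_ hF hG
  -- `s ↦ G (h s / l₂)` is non-increasing, so its value at `1` is at most its mean over `(0, 1)`.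
  have hG₁ : G.toFun (h 1 / l₂) ≤ 1 := by
    have hGh : Antitone fun s => G.toFun (h s / l₂) := fun _ _ hst =>
      G.mono' (ENNReal.div_le_div_right (hh hst) _)
    simpa using (hGh.ofReal_sub_mul_le_setLIntegral_Ioo 0 1).trans
      ((lintegral_mono_set Ioo_subset_Ioi_self).trans hG)
  exact (ENNReal.div_le_iff_le_mul (.inl hl₂.ne') (.inr hC₀)).1
    ((hGR _ hG₁).trans (le_max_right _ _))

theorem luxNorm_glue_equivalence_general (F G H : YoungFunction) (c t₀ : ℝ)
    (hdom : ∀ t : ℝ≥0∞, ENNReal.ofReal t₀ < t → G.toFun t ≤ F.toFun (ENNReal.ofReal c * t))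
    (hH1 : ∀ t : ℝ≥0∞, t ≤ 1 → H.toFun t = G.toFun t)
    (hH2 : ∀ t : ℝ≥0∞, 1 < t → H.toFun t = F.toFun t) :
    ∃ C₁ C₂ : ℝ≥0, ∀ f : ℝ → ℝ, Measurable f →
      (luxNorm H (Set.Ioi 0)
          (rearr (volume.restrict (Set.Ioi (0:ℝ))) (fun x => ENNReal.ofReal |f x|)) ≤
        (C₁ : ℝ≥0∞) *
          (luxNorm F (Set.Ioo 0 1)
              (rearr (volume.restrict (Set.Ioi (0:ℝ))) (fun x => ENNReal.ofReal |f x|)) +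
            luxNorm G (Set.Ioi 0)
              (rearr (volume.restrict (Set.Ioi (0:ℝ))) (fun x => ENNReal.ofReal |f x|)))) ∧
      (luxNorm F (Set.Ioo 0 1)
          (rearr (volume.restrict (Set.Ioi (0:ℝ))) (fun x => ENNReal.ofReal |f x|)) +
        luxNorm G (Set.Ioi 0)
          (rearr (volume.restrict (Set.Ioi (0:ℝ))) (fun x => ENNReal.ofReal |f x|)) ≤
        (C₂ : ℝ≥0∞) *
          luxNorm H (Set.Ioi 0)
            (rearr (volume.restrict (Set.Ioi (0:ℝ))) (fun x => ENNReal.ofReal |f x|))) := by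
  obtain ⟨C₁, hC₁⟩ := exists_luxNorm_glue_le_mul_add hH1 hH2
  obtain ⟨C₂, hC₂⟩ := exists_luxNorm_add_le_mul_luxNorm_glue ENNReal.ofReal_ne_top
    ENNReal.ofReal_ne_top hdom hH1 hH2
  exact ⟨C₁, C₂, fun f _ => ⟨hC₁ _ (rearr_antitone _ _), hC₂ _⟩⟩

/-- Let `F` dominate `G` near infinity and let `H` be a Young function
with `H = G` on `[0,1]` and `H = F` on `(1,∞)`. Then for every measurable `f` on `(0,∞)`,
`‖f*‖_{L^F(0,1)} + ‖f*‖_{L^G(0,∞)} ≃ ‖f*‖_{L^H(0,∞)}`, with constants independent of `f`;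
in particular one side is finite iff the other is. -/
theorem luxNorm_glue_equivalence (F G H : YoungFunction) (c t₀ : ℝ)
    (hc : 0 < c) (ht₀ : 0 < t₀)
    (hdom : ∀ t : ℝ≥0∞, ENNReal.ofReal t₀ < t → G.toFun t ≤ F.toFun (ENNReal.ofReal c * t))
    (hH1 : ∀ t : ℝ≥0∞, t ≤ 1 → H.toFun t = G.toFun t)
    (hH2 : ∀ t : ℝ≥0∞, 1 < t → H.toFun t = F.toFun t) :
    ∃ C₁ C₂ : ℝ≥0, ∀ f : ℝ → ℝ, Measurable f →
      (luxNorm H (Set.Ioi 0)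
          (rearr (volume.restrict (Set.Ioi (0:ℝ))) (fun x => ENNReal.ofReal |f x|)) ≤
        (C₁ : ℝ≥0∞) *
          (luxNorm F (Set.Ioo 0 1)
              (rearr (volume.restrict (Set.Ioi (0:ℝ))) (fun x => ENNReal.ofReal |f x|)) +
            luxNorm G (Set.Ioi 0)
              (rearr (volume.restrict (Set.Ioi (0:ℝ))) (fun x => ENNReal.ofReal |f x|)))) ∧
      (luxNorm F (Set.Ioo 0 1)
          (rearr (volume.restrict (Set.Ioi (0:ℝ))) (fun x => ENNReal.ofReal |f x|)) +
        luxNorm G (Set.Ioi 0)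
          (rearr (volume.restrict (Set.Ioi (0:ℝ))) (fun x => ENNReal.ofReal |f x|)) ≤
        (C₂ : ℝ≥0∞) *
          luxNorm H (Set.Ioi 0)
            (rearr (volume.restrict (Set.Ioi (0:ℝ))) (fun x => ENNReal.ofReal |f x|))) :=
  luxNorm_glue_equivalence_general F G H c t₀ hdom hH1 hH2
end
end

section
/- Let ‖·‖_{X(0,∞)} and ‖·‖_{S(0,∞)} be rearrangement-invariant function norms, α > 0, L > 0, and suppose there is a constant C₁ such that ‖χ_{(L,∞)}(s) ∫_s^∞ f(r) r^{α−1} dr‖_S ≤ C₁( ‖f‖_X + ‖∫_s^∞ f(r) r^{α−1} dr‖_X ) for every non-increasing f ∈ M₊(0,∞). Then there exists a constant C₂ such that ‖g* χ_{(2L,∞)}‖_S ≤ C₂ ‖g‖_X for every g ∈ M₊(0,∞). -/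
/-!
Write `u = g*`: it is non-increasing and has the norm of `g` in every rearrangement-invariant
space, so it suffices to bound `‖u χ_(2L,∞)‖_S` for non-increasing `u`, and by monotone
convergence its truncations `u χ_(2L, a_T]`, where `a_k = 2^k · 2L`. With the samples
`U_k = u(a_k)` for `k ≤ T` (and `U_k = 0` beyond), the test function
`f = ∑_k (U_k - U_(k+1)) a_k^(-α) χ_(0, 4 a_k]` is non-increasing and its tail integral
`∫_s^∞ f(r) r^(α-1) dr` is at least `(4^α - 2^α)/α · u(s)` on `(2L, a_T]`. So the hypothesis
bounds the truncated tail by `‖f‖_X` and the `X`-norm of that tail integral; both are dominated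
by multiples of `∑_k (U_k - U_(k+1)) χ_(0, 4 a_k]`, the dilation by `4` of a step function lying
below `u`. `RINorm` has no dilation axiom, so boundedness of dilations on dyadic step functions is
derived from rearrangement invariance: `(0, 2^(k+1) b]` splits, uniformly in `k`, into two
halves of measure `2^k b`.
-/

open MeasureTheory Set
open scoped ENNReal NNReal

noncomputable section

/-- A rearrangement-invariant function norm on `(0,∞)`, acting on nonnegative
(extended-real-valued) measurable functions; properties (P1)-(P6). -/
structure RINorm where
  N : (ℝ → ℝ≥0∞) → ℝ≥0∞
  eq_zero_iff' : ∀ f : ℝ → ℝ≥0∞,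
    N f = 0 ↔ ∀ᵐ s ∂(volume.restrict (Set.Ioi (0:ℝ))), f s = 0
  smul' : ∀ (c : ℝ≥0) (f : ℝ → ℝ≥0∞), N (fun s => (c : ℝ≥0∞) * f s) = (c : ℝ≥0∞) * N f
  add_le' : ∀ f g : ℝ → ℝ≥0∞, N (fun s => f s + g s) ≤ N f + N g
  mono' : ∀ f g : ℝ → ℝ≥0∞, (∀ s ∈ Set.Ioi (0:ℝ), f s ≤ g s) → N f ≤ N g
  sup' : ∀ f : ℕ → ℝ → ℝ≥0∞, (∀ k s, f k s ≤ f (k+1) s) →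
    N (fun s => ⨆ k, f k s) = ⨆ k, N (f k)
  chi_finite' : ∀ F : Set ℝ, MeasurableSet F → F ⊆ Set.Ioi 0 → volume F ≠ ⊤ →
    N (F.indicator 1) ≠ ⊤
  int_le' : ∀ F : Set ℝ, MeasurableSet F → F ⊆ Set.Ioi 0 → volume F ≠ ⊤ →
    ∃ C : ℝ≥0, ∀ f : ℝ → ℝ≥0∞, ∫⁻ s in F, f s ≤ (C : ℝ≥0∞) * N f
  rearr_inv' : ∀ f g : ℝ → ℝ≥0∞,
    (∀ t : ℝ≥0∞, volume {s : ℝ | 0 < s ∧ t < f s} = volume {s : ℝ | 0 < s ∧ t < g s}) →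
    N f = N g

/-- The associate norm of a rearrangement-invariant function norm. -/
def RINorm.assoc (X : RINorm) (g : ℝ → ℝ≥0∞) : ℝ≥0∞ :=
  ⨆ (f : ℝ → ℝ≥0∞) (_ : X.N f ≤ 1), ∫⁻ s in Set.Ioi (0:ℝ), f s * g s

namespace RINorm

variable (X : RINorm)

theorem N_const_mul (c : ℝ≥0∞) (f : ℝ → ℝ≥0∞) : X.N (fun s => c * f s) = c * X.N f := by
  induction c using ENNReal.recTopCoe with
  | coe c => exact X.smul' c f
  | top =>
    have hmono : ∀ (k : ℕ) (s : ℝ), ((k : ℝ≥0) : ℝ≥0∞) * f s ≤ ((k + 1 : ℕ) : ℝ≥0) * f s :=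
      fun k s => by gcongr; exact_mod_cast k.le_succ
    have htop : (fun s => ⊤ * f s) = fun s => ⨆ k : ℕ, ((k : ℝ≥0) : ℝ≥0∞) * f s := by
      simp only [← ENNReal.iSup_mul, ENNReal.coe_natCast, ENNReal.iSup_natCast]
    rw [htop, X.sup' _ hmono]
    simp_rw [X.smul']
    rw [← ENNReal.iSup_mul]
    simp only [ENNReal.coe_natCast, ENNReal.iSup_natCast]

end RINorm

section Rearrangement

variable {β : Type*} [MeasurableSpace β] (μ : Measure β) (g : β → ℝ≥0∞)

theorem rearr_antitone_s10 : Antitone (rearr μ g) :=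
  fun _ _ h => sInf_le_sInf fun _ ht => ht.trans (ENNReal.ofReal_le_ofReal h)

/-- The distribution function `t ↦ μ {t < g}` is right-continuous, which makes the infimum
defining `rearr` attained. -/
theorem rearr_le_iff {s : ℝ} {t : ℝ≥0∞} :
    rearr μ g s ≤ t ↔ μ {x | t < g x} ≤ ENNReal.ofReal s := by
  refine ⟨fun hle => ?_, fun h => sInf_le h⟩
  rcases eq_or_ne t ⊤ with rfl | ht
  · simp
  have hunion : {x | t < g x} = ⋃ n : ℕ, {x | t + ((n + 1 : ℕ) : ℝ≥0∞)⁻¹ < g x} := by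
    ext x
    simp only [mem_ofPred_eq, mem_iUnion]
    refine ⟨fun hx => ?_, fun ⟨n, hn⟩ => le_self_add.trans_lt hn⟩
    obtain ⟨n, hn⟩ := ENNReal.exists_inv_nat_lt (tsub_pos_of_lt hx).ne'
    refine ⟨n, lt_of_lt_of_le ?_ (add_tsub_cancel_of_le hx.le).le⟩
    refine ENNReal.add_lt_add_left ht (lt_of_le_of_lt ?_ hn)
    exact ENNReal.inv_le_inv.2 (by exact_mod_cast n.le_succ)
  have hmono : Monotone fun n : ℕ => {x | t + ((n + 1 : ℕ) : ℝ≥0∞)⁻¹ < g x} := by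
    intro m n hmn x (hx : _ < g x)
    refine lt_of_le_of_lt ?_ hx
    gcongr
  rw [hunion, hmono.measure_iUnion]
  refine iSup_le fun n => ?_
  have hlt : rearr μ g s < t + ((n + 1 : ℕ) : ℝ≥0∞)⁻¹ :=
    hle.trans_lt (ENNReal.lt_add_right ht (by simp))
  obtain ⟨t', ht', ht'lt⟩ := sInf_lt_iff.1 hlt
  exact (measure_mono fun x hx => ht'lt.trans hx).trans ht'

theorem volume_setOf_pos_ofReal_lt (d : ℝ≥0∞) :
    volume {s : ℝ | 0 < s ∧ ENNReal.ofReal s < d} = d := by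
  rcases eq_or_ne d ⊤ with rfl | hd
  · simp only [ENNReal.ofReal_lt_top, and_true]
    exact Real.volume_Ioi
  · have : {s : ℝ | 0 < s ∧ ENNReal.ofReal s < d} = Ioo 0 d.toReal := by
      ext s
      simp only [mem_ofPred_eq, mem_Ioo]
      exact and_congr_right fun hs => ENNReal.ofReal_lt_iff_lt_toReal hs.le hd
    rw [this, Real.volume_Ioo, sub_zero, ENNReal.ofReal_toReal hd]

end Rearrangement

theorem RINorm.N_rearr (X : RINorm) (g : ℝ → ℝ≥0∞) :
    X.N (rearr (volume.restrict (Ioi 0)) g) = X.N g := by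
  refine X.rearr_inv' _ _ fun t => ?_
  simp_rw [← not_le, rearr_le_iff, not_le, volume_setOf_pos_ofReal_lt,
    Measure.restrict_apply' measurableSet_Ioi]
  congr 1
  ext s
  exact and_comm

def layerSum (B : ℕ → Set ℝ) (c : ℕ → ℝ≥0∞) (M : ℕ) (s : ℝ) : ℝ≥0∞ :=
  ∑ k ∈ Finset.range M, c k * (B k).indicator 1 s

section LayerSum

variable {B : ℕ → Set ℝ} (c : ℕ → ℝ≥0∞) (M : ℕ)

theorem layerSum_eq_sum_Ico (hB : Monotone B) {s : ℝ} {j : ℕ} (hj : s ∈ B j)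
    (hlt : ∀ k < j, s ∉ B k) : layerSum B c M s = ∑ k ∈ Finset.Ico j M, c k := by
  have hmem : ∀ k, s ∈ B k ↔ j ≤ k :=
    fun k => ⟨fun hk => not_lt.1 fun hkj => hlt k hkj hk, fun hjk => hB hjk hj⟩
  classical
  simp only [layerSum, indicator_apply, hmem, Pi.one_apply, mul_ite, mul_one, mul_zero]
  rw [← Finset.sum_filter, Finset.range_eq_Ico, Finset.Ico_filter_le, Nat.zero_max]

theorem setOf_lt_layerSum (hB : Monotone B) (t : ℝ≥0∞) :
    {s | t < layerSum B c M s} =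
      ⋃ K ∈ (Finset.range M).filter (fun K => t < ∑ k ∈ Finset.Ico K M, c k), B K := by
  classical
  ext s
  simp only [mem_ofPred_eq, mem_iUnion, Finset.mem_filter, Finset.mem_range, exists_prop]
  constructor
  · intro hts
    by_cases hex : ∃ k, s ∈ B k
    · have hsum := layerSum_eq_sum_Ico c M hB (Nat.find_spec hex) fun k hk => Nat.find_min hex hk
      refine ⟨Nat.find hex, ⟨?_, hsum ▸ hts⟩, Nat.find_spec hex⟩
      by_contra hM
      rw [Finset.Ico_eq_empty (by omega), Finset.sum_empty] at hsum
      simp [hsum] at hts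
    · simp only [not_exists] at hex
      simp [layerSum, hex] at hts
  · rintro ⟨K, ⟨hKM, htK⟩, hsK⟩
    calc t < ∑ k ∈ Finset.Ico K M, c k := htK
      _ = ∑ k ∈ Finset.Ico K M, c k * (B k).indicator 1 s :=
        Finset.sum_congr rfl fun k hk => by
          rw [indicator_of_mem (hB (Finset.mem_Ico.1 hk).1 hsK), Pi.one_apply, mul_one]
      _ ≤ layerSum B c M s :=
        Finset.sum_le_sum_of_subset fun k hk => Finset.mem_range.2 (Finset.mem_Ico.1 hk).2

end LayerSum

theorem Monotone.biUnion_finset_eq {ι β : Type*} [LinearOrder ι] {B : ι → Set β}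
    (hB : Monotone B) {I : Finset ι} (hI : I.Nonempty) : ⋃ K ∈ I, B K = B (I.max' hI) :=
  (iUnion₂_subset fun K hK => hB (I.le_max' K hK)).antisymm
    (subset_biUnion_of_mem (u := B) (I.max'_mem hI))

theorem RINorm.N_layerSum_congr (X : RINorm) {B B' : ℕ → Set ℝ} (hB : Monotone B)
    (hB' : Monotone B') (hB0 : ∀ k, B k ⊆ Ioi 0) (hB'0 : ∀ k, B' k ⊆ Ioi 0)
    (hvol : ∀ k, volume (B k) = volume (B' k)) (c : ℕ → ℝ≥0∞) (M : ℕ) :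
    X.N (layerSum B c M) = X.N (layerSum B' c M) := by
  refine X.rearr_inv' _ _ fun t => ?_
  set I := (Finset.range M).filter (fun K => t < ∑ k ∈ Finset.Ico K M, c k)
  have hlevel : ∀ D : ℕ → Set ℝ, Monotone D → (∀ k, D k ⊆ Ioi 0) →
      {s | 0 < s ∧ t < layerSum D c M s} = ⋃ K ∈ I, D K := fun D hD hD0 => by
    rw [ofPred_and, setOf_lt_layerSum c M hD, inter_eq_right]
    exact iUnion₂_subset fun K _ => hD0 K
  rw [hlevel B hB hB0, hlevel B' hB' hB'0]
  rcases I.eq_empty_or_nonempty with hI | hI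
  · simp [hI]
  · rw [hB.biUnion_finset_eq hI, hB'.biUnion_finset_eq hI, hvol]

def lowerDyadicHalves (b : ℝ) : Set ℝ :=
  Ioc 0 b ∪ ⋃ j : ℕ, Ioc (2 ^ (j + 1) * b) (3 * 2 ^ j * b)

section LowerDyadicHalves

variable {b : ℝ}

theorem measurableSet_lowerDyadicHalves : MeasurableSet (lowerDyadicHalves b) :=
  measurableSet_Ioc.union (MeasurableSet.iUnion fun _ => measurableSet_Ioc)

theorem lowerDyadicHalves_inter_Ioc_zero (hb : 0 < b) :
    lowerDyadicHalves b ∩ Ioc 0 (2 * b) = Ioc 0 b := by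
  ext s
  simp only [lowerDyadicHalves, mem_inter_iff, mem_union, mem_iUnion, mem_Ioc]
  constructor
  · rintro ⟨h | ⟨j, hj, -⟩, hs0, hs⟩
    · exact h
    · have : 2 * b ≤ 2 ^ (j + 1) * b := by
        gcongr
        exact le_self_pow₀ one_le_two j.succ_ne_zero
      linarith
  · exact fun h => ⟨Or.inl h, h.1, by linarith [h.2]⟩

theorem lowerDyadicHalves_inter_Ioc (hb : 0 < b) (k : ℕ) :
    lowerDyadicHalves b ∩ Ioc (2 ^ (k + 1) * b) (2 ^ (k + 2) * b) =
      Ioc (2 ^ (k + 1) * b) (3 * 2 ^ k * b) := by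
  have h2k : b ≤ 2 ^ k * b := le_mul_of_one_le_left hb.le (one_le_pow₀ one_le_two)
  have hblock : ∀ j : ℕ, 2 ^ (j + 1) * b = 2 * (2 ^ j * b) ∧ 2 ^ (j + 2) * b = 4 * (2 ^ j * b) :=
    fun j => ⟨by ring, by ring⟩
  ext s
  simp only [lowerDyadicHalves, mem_inter_iff, mem_union, mem_iUnion, mem_Ioc]
  constructor
  · rintro ⟨⟨-, hsb⟩ | ⟨j, hjs, hsj⟩, hks, hsk⟩
    · linarith [(hblock k).1]
    · have hjk : j + 1 < k + 2 := by
        have : (2 : ℝ) ^ (j + 1) < 2 ^ (k + 2) := lt_of_mul_lt_mul_right (hjs.trans_le hsk) hb.le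
        exact (pow_lt_pow_iff_right₀ one_lt_two).1 this
      have hj3 : 3 * 2 ^ j * b ≤ 2 ^ (j + 2) * b := by
        have : 0 < 2 ^ j * b := by positivity
        linarith [(hblock j).2]
      have hkj : k + 1 < j + 2 := by
        have : (2 : ℝ) ^ (k + 1) < 2 ^ (j + 2) :=
          lt_of_mul_lt_mul_right (hks.trans_le (hsj.trans hj3)) hb.le
        exact (pow_lt_pow_iff_right₀ one_lt_two).1 this
      obtain rfl : j = k := by omega
      exact ⟨hks, hsj⟩
  · rintro ⟨hks, hsk⟩
    exact ⟨Or.inr ⟨k, hks, hsk⟩, hks, hsk.trans (by linarith [(hblock k).2])⟩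

theorem volume_lowerDyadicHalves_inter_Ioc (hb : 0 < b) (k : ℕ) :
    volume (lowerDyadicHalves b ∩ Ioc 0 (2 ^ (k + 1) * b)) = ENNReal.ofReal (2 ^ k * b) := by
  induction k with
  | zero => simp [lowerDyadicHalves_inter_Ioc_zero hb]
  | succ k ih =>
    have h2k : (0 : ℝ) < 2 ^ k * b := by positivity
    rw [← Ioc_union_Ioc_eq_Ioc (b := 2 ^ (k + 1) * b) (by positivity) (by gcongr <;> norm_num),
      inter_union_distrib_left, measure_union ?_ (measurableSet_lowerDyadicHalves.inter
        measurableSet_Ioc), ih, lowerDyadicHalves_inter_Ioc hb, Real.volume_Ioc,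
      show 3 * 2 ^ k * b - 2 ^ (k + 1) * b = 2 ^ k * b by ring, ← ENNReal.ofReal_add h2k.le h2k.le]
    · congr 1; ring
    · exact (Ioc_disjoint_Ioc_of_le le_rfl).mono inter_subset_right inter_subset_right

theorem volume_Ioc_diff_lowerDyadicHalves (hb : 0 < b) (k : ℕ) :
    volume (Ioc 0 (2 ^ (k + 1) * b) \ lowerDyadicHalves b) = ENNReal.ofReal (2 ^ k * b) := by
  have h := measure_inter_add_sdiff (μ := volume) (Ioc 0 (2 ^ (k + 1) * b))
    (measurableSet_lowerDyadicHalves (b := b))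
  have hsum : ENNReal.ofReal (2 ^ (k + 1) * b) =
      ENNReal.ofReal (2 ^ k * b) + ENNReal.ofReal (2 ^ k * b) := by
    rw [← ENNReal.ofReal_add (by positivity) (by positivity)]; ring_nf
  rw [inter_comm, volume_lowerDyadicHalves_inter_Ioc hb, Real.volume_Ioc, sub_zero, hsum] at h
  exact (ENNReal.add_right_inj ENNReal.ofReal_ne_top).1 h

end LowerDyadicHalves

section Dilation

variable (X : RINorm) {b : ℝ} (c : ℕ → ℝ≥0∞) (M : ℕ)

theorem monotone_Ioc_two_pow_mul (hb : 0 ≤ b) : Monotone fun k : ℕ => Ioc (0 : ℝ) (2 ^ k * b) :=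
  fun _ _ h => Ioc_subset_Ioc_right (by gcongr; exact one_le_two)

theorem layerSum_le_add_inter_add_diff (B : ℕ → Set ℝ) (A : Set ℝ) (s : ℝ) :
    layerSum B c M s ≤ layerSum (fun k => B k ∩ A) c M s + layerSum (fun k => B k \ A) c M s := by
  classical
  simp only [layerSum, ← Finset.sum_add_distrib, ← mul_add]
  gcongr with k
  by_cases hA : s ∈ A <;> by_cases hB : s ∈ B k <;> simp [hA, hB]

/-- Cut each `(0, 2^(k+1) b]` along `lowerDyadicHalves b` into two parts of measure `2^k b`. -/
theorem RINorm.N_layerSum_Ioc_two_mul_le (hb : 0 < b) :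
    X.N (layerSum (fun k => Ioc 0 (2 ^ k * (2 * b))) c M) ≤
      2 * X.N (layerSum (fun k => Ioc 0 (2 ^ k * b)) c M) := by
  have hnodes : ∀ k : ℕ, 2 ^ k * (2 * b) = 2 ^ (k + 1) * b := fun k => by ring
  have hmono := monotone_Ioc_two_pow_mul (b := 2 * b) (by positivity)
  have hhalf : ∀ B' : ℕ → Set ℝ, Monotone B' → (∀ k, B' k ⊆ Ioc 0 (2 ^ k * (2 * b))) →
      (∀ k, volume (B' k) = ENNReal.ofReal (2 ^ k * b)) →
      X.N (layerSum B' c M) = X.N (layerSum (fun k => Ioc 0 (2 ^ k * b)) c M) :=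
    fun B' hB' hsub hvol => X.N_layerSum_congr hB' (monotone_Ioc_two_pow_mul hb.le)
      (fun k => (hsub k).trans Ioc_subset_Ioi_self) (fun _ => Ioc_subset_Ioi_self)
      (fun k => by rw [hvol, Real.volume_Ioc, sub_zero]) c M
  calc X.N (layerSum (fun k => Ioc 0 (2 ^ k * (2 * b))) c M)
      ≤ X.N (layerSum (fun k => Ioc 0 (2 ^ k * (2 * b)) ∩ lowerDyadicHalves b) c M) +
          X.N (layerSum (fun k => Ioc 0 (2 ^ k * (2 * b)) \ lowerDyadicHalves b) c M) :=
        (X.mono' _ _ fun s _ => layerSum_le_add_inter_add_diff c M _ _ s).trans (X.add_le' _ _)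
    _ = 2 * X.N (layerSum (fun k => Ioc 0 (2 ^ k * b)) c M) := by
      rw [hhalf _ (fun _ _ h => inter_subset_inter_left _ (hmono h)) (fun _ => inter_subset_left)
          fun k => by dsimp only; rw [inter_comm, hnodes, volume_lowerDyadicHalves_inter_Ioc hb],
        hhalf _ (fun _ _ h => sdiff_subset_sdiff_left (hmono h)) (fun _ => sdiff_subset)
          fun k => by dsimp only; rw [hnodes, volume_Ioc_diff_lowerDyadicHalves hb], two_mul]

theorem RINorm.N_layerSum_Ioc_four_mul_le (hb : 0 < b) :
    X.N (layerSum (fun k => Ioc 0 (2 ^ k * (4 * b))) c M) ≤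
      4 * X.N (layerSum (fun k => Ioc 0 (2 ^ k * b)) c M) := by
  have h := X.N_layerSum_Ioc_two_mul_le c M (b := 2 * b) (by positivity)
  rw [show 2 * (2 * b) = 4 * b by ring] at h
  calc _ ≤ 2 * X.N (layerSum (fun k => Ioc 0 (2 ^ k * (2 * b))) c M) := h
    _ ≤ 2 * (2 * X.N (layerSum (fun k => Ioc 0 (2 ^ k * b)) c M)) := by
      gcongr; exact X.N_layerSum_Ioc_two_mul_le c M hb
    _ = 4 * X.N (layerSum (fun k => Ioc 0 (2 ^ k * b)) c M) := by rw [← mul_assoc]; norm_num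

end Dilation

def weightedTail (α : ℝ) (f : ℝ → ℝ≥0∞) (s : ℝ) : ℝ≥0∞ :=
  ∫⁻ r in Ioi s, f r * ENNReal.ofReal (r ^ (α - 1))

section WeightedTail

variable {α s : ℝ}

theorem weightedTail_indicator_Ioc (hα : 0 < α) (hs : 0 < s) {b : ℝ} (hb : 0 ≤ b) :
    weightedTail α ((Ioc 0 b).indicator 1) s = ENNReal.ofReal ((b ^ α - s ^ α) / α) := by
  have hind : (fun r => (Ioc 0 b).indicator 1 r * ENNReal.ofReal (r ^ (α - 1))) =
      (Ioc 0 b).indicator fun r => ENNReal.ofReal (r ^ (α - 1)) := by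
    ext r; by_cases hr : r ∈ Ioc 0 b <;> simp [hr]
  rw [weightedTail, hind, setLIntegral_indicator measurableSet_Ioc, Ioc_inter_Ioi,
    max_eq_right hs.le]
  rcases le_or_gt s b with hsb | hbs
  · have hint : IntegrableOn (fun r : ℝ => r ^ (α - 1)) (Ioc s b) :=
      (intervalIntegrable_iff_integrableOn_Ioc_of_le hsb).1
        (intervalIntegral.intervalIntegrable_rpow' (by linarith))
    rw [← ofReal_integral_eq_lintegral_ofReal hint, ← intervalIntegral.integral_of_le hsb,
      integral_rpow (Or.inl (by linarith)), sub_add_cancel]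
    filter_upwards [self_mem_ae_restrict measurableSet_Ioc] with r hr
    exact Real.rpow_nonneg (hs.trans hr.1).le _
  · rw [Ioc_eq_empty hbs.not_gt, Measure.restrict_empty, lintegral_zero_measure, eq_comm,
      ENNReal.ofReal_eq_zero]
    exact div_nonpos_of_nonpos_of_nonneg
      (sub_nonpos.2 (Real.rpow_le_rpow hb hbs.le hα.le)) hα.le

theorem weightedTail_layerSum_Ioc (hα : 0 < α) (hs : 0 < s) {d : ℕ → ℝ} (hd : ∀ k, 0 ≤ d k)
    (c : ℕ → ℝ≥0∞) (M : ℕ) :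
    weightedTail α (layerSum (fun k => Ioc 0 (d k)) c M) s =
      ∑ k ∈ Finset.range M, c k * ENNReal.ofReal ((d k ^ α - s ^ α) / α) := by
  have hmeas : ∀ k, Measurable fun r : ℝ =>
      (Ioc 0 (d k)).indicator 1 r * ENNReal.ofReal (r ^ (α - 1)) := fun k =>
    (measurable_one.indicator measurableSet_Ioc).mul (by fun_prop)
  simp only [weightedTail, layerSum, Finset.sum_mul, mul_assoc]
  rw [lintegral_finsetSum _ fun k _ => (hmeas k).const_mul (c k)]
  refine Finset.sum_congr rfl fun k _ => ?_
  rw [lintegral_const_mul _ (hmeas k)]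
  exact congrArg _ (weightedTail_indicator_Ioc hα hs (hd k))

end WeightedTail

theorem Finset.sum_Ico_tsub_add_of_antitone {A : Type*} [AddCommMonoid A] [PartialOrder A]
    [CanonicallyOrderedAdd A] [Sub A] [OrderedSub A] {U : ℕ → A} (hU : Antitone U) {j M : ℕ}
    (hjM : j ≤ M) : ∑ k ∈ Finset.Ico j M, (U k - U (k + 1)) + U M = U j := by
  induction M, hjM using Nat.le_induction with
  | base => simp
  | succ M hjM ih =>
    rw [Finset.sum_Ico_succ_top hjM, add_assoc, tsub_add_cancel_of_le (hU M.le_succ), ih]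

theorem exists_le_two_pow_mul {x : ℝ} (hx : 0 < x) (s : ℝ) : ∃ n : ℕ, s ≤ 2 ^ n * x := by
  obtain ⟨n, hn⟩ := pow_unbounded_of_one_lt (s / x) one_lt_two
  exact ⟨n, ((div_lt_iff₀ hx).1 hn).le⟩

theorem exists_two_pow_mul_lt_le {x s : ℝ} (hx : 0 < x) (hxs : x < s) :
    ∃ i : ℕ, 2 ^ i * x < s ∧ s ≤ 2 ^ (i + 1) * x := by
  classical
  have hex := exists_le_two_pow_mul hx s
  have hn : Nat.find hex ≠ 0 := fun h0 => by
    have := Nat.find_spec hex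
    rw [h0, pow_zero, one_mul] at this
    linarith
  refine ⟨Nat.find hex - 1, not_le.1 (Nat.find_min hex (by omega)), ?_⟩
  rw [Nat.sub_add_cancel (Nat.one_le_iff_ne_zero.2 hn)]
  exact Nat.find_spec hex

theorem iUnion_Ioc_two_pow_mul {x : ℝ} (hx : 0 < x) : ⋃ T : ℕ, Ioc x (2 ^ T * x) = Ioi x :=
  (iUnion_subset fun _ => Ioc_subset_Ioi_self).antisymm fun s hs =>
    mem_iUnion.2 ((exists_le_two_pow_mul hx s).imp fun _ h => ⟨hs, h⟩)

theorem layerSum_Ioc_antitoneOn (d : ℕ → ℝ) (c : ℕ → ℝ≥0∞) (M : ℕ) :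
    AntitoneOn (layerSum (fun k => Ioc 0 (d k)) c M) (Ioi 0) := by
  intro r hr r' _ hrr'
  refine Finset.sum_le_sum fun k _ => ?_
  gcongr
  by_cases hr'k : r' ∈ Ioc 0 (d k)
  · rw [indicator_of_mem hr'k, indicator_of_mem (show r ∈ Ioc 0 (d k) from ⟨hr, hrr'.trans hr'k.2⟩)]
    rfl
  · rw [indicator_of_notMem hr'k]
    exact zero_le

theorem four_rpow_sub_two_rpow_div_pos {α : ℝ} (hα : 0 < α) : 0 < (4 ^ α - 2 ^ α) / α := by
  have : (2 : ℝ) ^ α < 4 ^ α := Real.rpow_lt_rpow (by norm_num) (by norm_num) hα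
  exact div_pos (by linarith) hα

theorem Real.rpow_neg_mul_sub_rpow {α a c s : ℝ} (ha : 0 < a) (hc : 0 ≤ c) (hs : 0 ≤ s) :
    a ^ (-α) * ((c * a) ^ α - s ^ α) = c ^ α - (s / a) ^ α := by
  have hapos : 0 < a ^ α := Real.rpow_pos_of_pos ha α
  rw [Real.rpow_neg ha.le, Real.mul_rpow hc ha.le, Real.div_rpow hs ha.le]
  field_simp

section TestFunction

variable (α : ℝ) (u : ℝ → ℝ≥0∞) (L : ℝ) (T : ℕ)

def dyadicSample (k : ℕ) : ℝ≥0∞ := if k ≤ T then u (2 ^ k * (2 * L)) else 0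

def dyadicJump (k : ℕ) : ℝ≥0∞ := dyadicSample u L T k - dyadicSample u L T (k + 1)

def testFn : ℝ → ℝ≥0∞ :=
  layerSum (fun k => Ioc 0 (2 ^ k * (4 * (2 * L))))
    (fun k => dyadicJump u L T k * ENNReal.ofReal ((2 ^ k * (2 * L)) ^ (-α))) (T + 1)

variable {α u L T}

theorem testFn_antitoneOn : AntitoneOn (testFn α u L T) (Ioi 0) :=
  layerSum_Ioc_antitoneOn _ _ _

variable (hu : AntitoneOn u (Ioi 0)) (hL : 0 < L)
include hu hL

theorem dyadicSample_antitone : Antitone (dyadicSample u L T) := by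
  intro i j hij
  simp only [dyadicSample]
  split_ifs with hj hi hi
  · exact hu (mem_Ioi.2 (by positivity)) (mem_Ioi.2 (by positivity)) (by gcongr; exact one_le_two)
  · omega
  · exact zero_le
  · exact le_rfl

theorem sum_Ico_dyadicJump {j : ℕ} (hj : j ≤ T + 1) :
    ∑ k ∈ Finset.Ico j (T + 1), dyadicJump u L T k = dyadicSample u L T j := by
  have h := Finset.sum_Ico_tsub_add_of_antitone (dyadicSample_antitone (T := T) hu hL) hj
  rwa [dyadicSample, if_neg (by omega), add_zero] at h

theorem layerSum_dyadicJump_le {s : ℝ} (hs : 0 < s) :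
    layerSum (fun k => Ioc 0 (2 ^ k * (2 * L))) (dyadicJump u L T) (T + 1) s ≤ u s := by
  classical
  have hex := exists_le_two_pow_mul (by positivity : 0 < 2 * L) s
  rw [layerSum_eq_sum_Ico _ _ (monotone_Ioc_two_pow_mul (by positivity))
    ⟨hs, Nat.find_spec hex⟩ fun k hk hsk => Nat.find_min hex hk hsk.2]
  rcases le_or_gt (Nat.find hex) (T + 1) with hj | hj
  · rw [sum_Ico_dyadicJump hu hL hj, dyadicSample]
    split_ifs
    · exact hu hs (mem_Ioi.2 (by positivity)) (Nat.find_spec hex)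
    · exact zero_le
  · rw [Finset.Ico_eq_empty (by omega), Finset.sum_empty]
    exact zero_le

end TestFunction

section TestFunctionBounds

variable {α : ℝ} {u : ℝ → ℝ≥0∞} {L : ℝ} {T : ℕ} (hα : 0 < α) (hL : 0 < L)
include hα hL

theorem weightedTail_testFn {s : ℝ} (hs : 0 < s) :
    weightedTail α (testFn α u L T) s = ∑ k ∈ Finset.range (T + 1),
      dyadicJump u L T k * ENNReal.ofReal ((4 ^ α - (s / (2 ^ k * (2 * L))) ^ α) / α) := by
  rw [testFn, weightedTail_layerSum_Ioc hα hs fun k => by positivity]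
  refine Finset.sum_congr rfl fun k _ => ?_
  have hak : 0 < 2 ^ k * (2 * L) := by positivity
  rw [mul_assoc, ← ENNReal.ofReal_mul (by positivity), ← mul_div_assoc,
    show 2 ^ k * (4 * (2 * L)) = 4 * (2 ^ k * (2 * L)) by ring,
    Real.rpow_neg_mul_sub_rpow hak (by norm_num) hs.le]

theorem testFn_le (s : ℝ) :
    testFn α u L T s ≤ ENNReal.ofReal ((2 * L) ^ (-α)) *
      layerSum (fun k => Ioc 0 (2 ^ k * (4 * (2 * L)))) (dyadicJump u L T) (T + 1) s := by
  rw [testFn, layerSum, layerSum, Finset.mul_sum]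
  refine Finset.sum_le_sum fun k _ => ?_
  calc _ = ENNReal.ofReal ((2 ^ k * (2 * L)) ^ (-α)) *
        (dyadicJump u L T k * (Ioc 0 (2 ^ k * (4 * (2 * L)))).indicator 1 s) := by ring
    _ ≤ _ := mul_le_mul_left (ENNReal.ofReal_le_ofReal <| Real.rpow_le_rpow_of_nonpos (by positivity)
        (le_mul_of_one_le_left (by positivity) (one_le_pow₀ one_le_two)) (neg_nonpos.2 hα.le)) _

theorem weightedTail_testFn_le {s : ℝ} (hs : 0 < s) :
    weightedTail α (testFn α u L T) s ≤ ENNReal.ofReal (4 ^ α / α) *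
      layerSum (fun k => Ioc 0 (2 ^ k * (4 * (2 * L)))) (dyadicJump u L T) (T + 1) s := by
  rw [weightedTail_testFn hα hL hs, layerSum, Finset.mul_sum]
  refine Finset.sum_le_sum fun k _ => ?_
  have hak : 0 < 2 ^ k * (2 * L) := by positivity
  by_cases hsk : s ≤ 2 ^ k * (4 * (2 * L))
  · rw [indicator_of_mem (show s ∈ Ioc 0 _ from ⟨hs, hsk⟩), Pi.one_apply, mul_one, mul_comm]
    gcongr
    exact sub_le_self _ (by positivity)
  · have hzero : ENNReal.ofReal ((4 ^ α - (s / (2 ^ k * (2 * L))) ^ α) / α) = 0 := by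
      rw [ENNReal.ofReal_eq_zero]
      refine div_nonpos_of_nonpos_of_nonneg (sub_nonpos.2 ?_) hα.le
      refine Real.rpow_le_rpow (by norm_num) ?_ hα.le
      rw [le_div_iff₀ hak]
      linarith
    rw [hzero, mul_zero]
    exact zero_le

theorem ofReal_mul_le_weightedTail_testFn (hu : AntitoneOn u (Ioi 0)) {s : ℝ}
    (hs : s ∈ Ioc (2 * L) (2 ^ T * (2 * L))) :
    ENNReal.ofReal ((4 ^ α - 2 ^ α) / α) * u s ≤ weightedTail α (testFn α u L T) s := by
  have hs0 : 0 < s := by linarith [hs.1]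
  obtain ⟨i, his, hsi⟩ := exists_two_pow_mul_lt_le (by positivity) hs.1
  have hiT : i < T := (pow_lt_pow_iff_right₀ one_lt_two).1
    (lt_of_mul_lt_mul_right (his.trans_le hs.2) (by positivity))
  set κ := ENNReal.ofReal ((4 ^ α - 2 ^ α) / α)
  calc κ * u s ≤ κ * dyadicSample u L T i := by
        rw [dyadicSample, if_pos hiT.le]
        gcongr
        exact hu (mem_Ioi.2 (by positivity)) hs0 his.le
    _ = ∑ k ∈ Finset.Ico i (T + 1), κ * dyadicJump u L T k := by
        rw [← Finset.mul_sum, sum_Ico_dyadicJump hu hL (by omega)]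
    _ ≤ ∑ k ∈ Finset.Ico i (T + 1), dyadicJump u L T k *
          ENNReal.ofReal ((4 ^ α - (s / (2 ^ k * (2 * L))) ^ α) / α) := by
        refine Finset.sum_le_sum fun k hk => ?_
        have hak : 0 < 2 ^ k * (2 * L) := by positivity
        have hsk : s / (2 ^ k * (2 * L)) ≤ 2 := by
          rw [div_le_iff₀ hak]
          calc s ≤ 2 ^ (i + 1) * (2 * L) := hsi
            _ ≤ 2 ^ (k + 1) * (2 * L) := by
              gcongr
              · exact one_le_two
              · exact (Finset.mem_Ico.1 hk).1
            _ = 2 * (2 ^ k * (2 * L)) := by ring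
        rw [mul_comm]
        refine mul_le_mul_right (ENNReal.ofReal_le_ofReal ?_) _
        exact div_le_div_of_nonneg_right
          (sub_le_sub_left (Real.rpow_le_rpow (by positivity) hsk hα.le) _) hα.le
    _ ≤ ∑ k ∈ Finset.range (T + 1), dyadicJump u L T k *
          ENNReal.ofReal ((4 ^ α - (s / (2 ^ k * (2 * L))) ^ α) / α) :=
        Finset.sum_le_sum_of_subset fun k hk => Finset.mem_range.2 (Finset.mem_Ico.1 hk).2
    _ = weightedTail α (testFn α u L T) s := (weightedTail_testFn hα hL hs0).symm

theorem indicator_Ioc_le_weightedTail_testFn (hu : AntitoneOn u (Ioi 0)) (s : ℝ) :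
    (Ioc (2 * L) (2 ^ T * (2 * L))).indicator u s ≤
      (ENNReal.ofReal ((4 ^ α - 2 ^ α) / α))⁻¹ *
        (Ioi L).indicator (weightedTail α (testFn α u L T)) s := by
  by_cases hs : s ∈ Ioc (2 * L) (2 ^ T * (2 * L))
  · rw [indicator_of_mem hs, indicator_of_mem (mem_Ioi.2 (by linarith [hs.1])),
      ← ENNReal.inv_mul_cancel_left (ENNReal.ofReal_pos.2 (four_rpow_sub_two_rpow_div_pos hα)).ne'
        ENNReal.ofReal_ne_top (b := u s)]
    exact mul_le_mul_right (ofReal_mul_le_weightedTail_testFn hα hL hu hs) _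
  · rw [indicator_of_notMem hs]
    exact zero_le

end TestFunctionBounds

section Hardy

variable (X S : RINorm) {α L : ℝ} (hα : 0 < α) (hL : 0 < L) (C₁ : ℝ≥0)
  (h : ∀ f : ℝ → ℝ≥0∞, AntitoneOn f (Ioi 0) →
    S.N ((Ioi L).indicator (weightedTail α f)) ≤ C₁ * (X.N f + X.N (weightedTail α f)))
include hα hL h

theorem RINorm.N_indicator_Ioc_le_of_hardy : ∃ C : ℝ≥0, ∀ u : ℝ → ℝ≥0∞,
    AntitoneOn u (Ioi 0) → ∀ T : ℕ,
      S.N ((Ioc (2 * L) (2 ^ T * (2 * L))).indicator u) ≤ C * X.N u := by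
  set κ := ENNReal.ofReal ((4 ^ α - 2 ^ α) / α)
  have hκ : κ ≠ 0 := (ENNReal.ofReal_pos.2 (four_rpow_sub_two_rpow_div_pos hα)).ne'
  set C := κ⁻¹ * (C₁ * ((ENNReal.ofReal ((2 * L) ^ (-α)) + ENNReal.ofReal (4 ^ α / α)) * 4))
  have hC : C ≠ ⊤ := by finiteness
  refine ⟨C.toNNReal, fun u hu T => ?_⟩
  set f := testFn α u L T
  set W := layerSum (fun k => Ioc 0 (2 ^ k * (4 * (2 * L)))) (dyadicJump u L T) (T + 1)
  have hW : X.N W ≤ 4 * X.N u :=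
    (X.N_layerSum_Ioc_four_mul_le _ _ (by positivity)).trans
      (mul_le_mul_right (X.mono' _ _ fun s hs => layerSum_dyadicJump_le hu hL hs) 4)
  have hf : X.N f ≤ ENNReal.ofReal ((2 * L) ^ (-α)) * X.N W :=
    (X.mono' _ _ fun s _ => testFn_le hα hL s).trans_eq (X.N_const_mul _ _)
  have hF : X.N (weightedTail α f) ≤ ENNReal.ofReal (4 ^ α / α) * X.N W :=
    (X.mono' _ _ fun s hs => weightedTail_testFn_le hα hL hs).trans_eq (X.N_const_mul _ _)
  rw [ENNReal.coe_toNNReal hC]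
  calc S.N ((Ioc (2 * L) (2 ^ T * (2 * L))).indicator u)
      ≤ κ⁻¹ * S.N ((Ioi L).indicator (weightedTail α f)) :=
        (S.mono' _ _ fun s _ => indicator_Ioc_le_weightedTail_testFn hα hL hu s).trans_eq
          (S.N_const_mul _ _)
    _ ≤ κ⁻¹ * (C₁ * (X.N f + X.N (weightedTail α f))) := by gcongr; exact h f testFn_antitoneOn
    _ ≤ κ⁻¹ * (C₁ * (ENNReal.ofReal ((2 * L) ^ (-α)) * (4 * X.N u) +
          ENNReal.ofReal (4 ^ α / α) * (4 * X.N u))) := by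
        gcongr
        exacts [hf.trans (mul_le_mul_right hW _), hF.trans (mul_le_mul_right hW _)]
    _ = C * X.N u := by ring

theorem RINorm.N_indicator_Ioi_le_of_hardy : ∃ C : ℝ≥0, ∀ u : ℝ → ℝ≥0∞,
    AntitoneOn u (Ioi 0) → S.N ((Ioi (2 * L)).indicator u) ≤ C * X.N u := by
  obtain ⟨C, hC⟩ := X.N_indicator_Ioc_le_of_hardy S hα hL C₁ h
  refine ⟨C, fun u hu => ?_⟩
  have hsup : (Ioi (2 * L)).indicator u =
      fun s => ⨆ T : ℕ, (Ioc (2 * L) (2 ^ T * (2 * L))).indicator u s := by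
    ext s
    rw [← iUnion_Ioc_two_pow_mul (by positivity), indicator_iUnion_apply rfl]
  have hmono : ∀ (T : ℕ) (s : ℝ), (Ioc (2 * L) (2 ^ T * (2 * L))).indicator u s ≤
      (Ioc (2 * L) (2 ^ (T + 1) * (2 * L))).indicator u s := fun T s =>
    indicator_le_indicator_of_subset
      (Ioc_subset_Ioc_right (by gcongr <;> norm_num)) (fun _ => zero_le) s
  rw [hsup, S.sup' _ hmono]
  exact iSup_le (hC u hu)

end Hardy

/-- **Proposition P:1.** If
`‖χ_{(L,∞)}(s) ∫_s^∞ f(r) r^{α−1} dr‖_S ≤ C₁ (‖f‖_X + ‖∫_s^∞ f(r) r^{α−1} dr‖_X)`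
for every non-increasing `f ∈ M₊(0,∞)`, then there is `C₂` with
`‖g* χ_{(2L,∞)}‖_S ≤ C₂ ‖g‖_X` for every `g ∈ M₊(0,∞)`. -/
theorem rearrangement_tail_bound_of_hardy_type (X S : RINorm) (α L : ℝ)
    (hα : 0 < α) (hL : 0 < L) (C₁ : ℝ≥0)
    (h : ∀ f : ℝ → ℝ≥0∞, AntitoneOn f (Set.Ioi 0) →
      S.N ((Set.Ioi L).indicator
          (fun s => ∫⁻ r in Set.Ioi s, f r * ENNReal.ofReal (r ^ (α - 1)))) ≤
        (C₁ : ℝ≥0∞) *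
          (X.N f + X.N (fun s => ∫⁻ r in Set.Ioi s, f r * ENNReal.ofReal (r ^ (α - 1))))) :
    ∃ C₂ : ℝ≥0, ∀ g : ℝ → ℝ≥0∞,
      S.N ((Set.Ioi (2 * L)).indicator
          (rearr (volume.restrict (Set.Ioi (0:ℝ))) g)) ≤
        (C₂ : ℝ≥0∞) * X.N g := by
  obtain ⟨C, hC⟩ := X.N_indicator_Ioi_le_of_hardy S hα hL C₁ h
  exact ⟨C, fun g => (hC _ ((rearr_antitone_s10 _ g).antitoneOn _)).trans_eq (by rw [X.N_rearr])⟩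
end
end

section
/- Let A be a Young function with right-continuous derivative a, let B be a Young function, and suppose there exists a constant C such that the inequality ‖f‖_{L^B(1,∞)} ≤ C ‖f‖_{L^A(0,∞)} holds for every non-increasing f : (0,∞) → [0,∞). Then A dominates B near zero: there exist c > 0 and t₀ > 0 such that B(t) ≤ A(c t) for all 0 ≤ t < t₀. -/
open MeasureTheory Set
open scoped ENNReal NNReal

noncomputable section

lemma lint_if (K : ℝ≥0∞) (a r : ℝ) :
    ∫⁻ s in Set.Ioi a, (if s < r then K else 0) = K * ENNReal.ofReal (r - a) := by
  have h1 : ∀ s : ℝ, (if s < r then K else 0) = (Set.Iio r).indicator (fun _ => K) s := by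
    intro s; by_cases h : s < r <;> simp [h]
  rw [lintegral_congr h1, lintegral_indicator measurableSet_Iio, setLIntegral_const,
    Measure.restrict_apply measurableSet_Iio, Set.Iio_inter_Ioi, Real.volume_Ioo]

/-- If `‖f‖_{L^B(1,∞)} ≤ C ‖f‖_{L^A(0,∞)}` holds for every
non-increasing `f : (0,∞) → [0,∞)`, then `A` dominates `B` near zero: there are
`c > 0` and `t₀ > 0` with `B(t) ≤ A(ct)` for `0 ≤ t < t₀`. -/
theorem domination_near_zero_of_tail_inequality (A B : YoungFunction) (C : ℝ≥0)
    (h : ∀ f : ℝ → ℝ, (∀ s ∈ Set.Ioi (0:ℝ), 0 ≤ f s) → AntitoneOn f (Set.Ioi 0) →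
      luxNorm B (Set.Ioi 1) (fun s => ENNReal.ofReal (f s)) ≤
        (C : ℝ≥0∞) * luxNorm A (Set.Ioi 0) (fun s => ENNReal.ofReal (f s))) :
    ∃ c t₀ : ℝ, 0 < c ∧ 0 < t₀ ∧ ∀ t : ℝ, 0 ≤ t → t < t₀ →
      B.toFun (ENNReal.ofReal t) ≤ A.toFun (ENNReal.ofReal (c * t)) := by
  classical
  set c : ℝ := 2 * ((C : ℝ) + 1) with hcdef
  have hc0 : 0 < c := by positivity
  obtain ⟨t₁, ht₁0, ht₁top⟩ := A.nontrivial_ne_top'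
  set u : ℝ≥0∞ := min t₁ 1 with hudef
  have hu0 : 0 < u := lt_min ht₁0 one_pos
  have hutop : u ≠ ⊤ := ne_top_of_le_ne_top (by simp) (min_le_right t₁ 1)
  have hAu : A.toFun u ≠ ⊤ := by
    intro hh
    exact ht₁top (top_le_iff.mp (hh ▸ A.mono' (min_le_left t₁ 1)))
  set M : ℝ := (A.toFun u).toReal with hMdef
  have hM0 : 0 ≤ M := ENNReal.toReal_nonneg
  set θ : ℝ := 1 / (2 * (M + 1)) with hθdef
  have hθ0 : 0 < θ := by positivity
  have hθ1 : θ ≤ 1 := by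
    rw [hθdef, div_le_one (by positivity)]; nlinarith
  have hscale : A.toFun (ENNReal.ofReal θ * u) ≤ ENNReal.ofReal (1/2) := by
    have hcv := A.convex' u 0 θ hθ0.le hθ1
    simp only [mul_zero, add_zero, A.zero'] at hcv
    refine hcv.trans ?_
    have : A.toFun u = ENNReal.ofReal M := (ENNReal.ofReal_toReal hAu).symm
    rw [this, ← ENNReal.ofReal_mul hθ0.le]
    apply ENNReal.ofReal_le_ofReal
    rw [hθdef]
    rw [div_mul_eq_mul_div, one_mul, div_le_div_iff₀ (by positivity) (by norm_num)]
    nlinarith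
  have hu0' : 0 < u.toReal := ENNReal.toReal_pos hu0.ne' hutop
  refine ⟨c, θ * u.toReal / c, hc0, by positivity, ?_⟩
  intro t ht0 htt₀
  rcases eq_or_lt_of_le ht0 with h0 | ht0'
  · rw [← h0]; simp [B.zero']
  have hact : A.toFun (ENNReal.ofReal (c * t)) ≤ ENNReal.ofReal (1/2) := by
    refine le_trans (A.mono' ?_) hscale
    calc ENNReal.ofReal (c * t) ≤ ENNReal.ofReal (θ * u.toReal) := by
          apply ENNReal.ofReal_le_ofReal
          rw [lt_div_iff₀ hc0] at htt₀; nlinarith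
      _ = ENNReal.ofReal θ * u := by
          rw [ENNReal.ofReal_mul hθ0.le, ENNReal.ofReal_toReal hutop]
  set a : ℝ≥0∞ := A.toFun (ENNReal.ofReal (c * t)) with hadef
  -- key lemma
  have key : ∀ r : ℝ, 2 ≤ r → ENNReal.ofReal r * a ≤ 1 →
      B.toFun (ENNReal.ofReal (2 * t)) ≤ ENNReal.ofReal (2 / r) := by
    intro r hr2 hra
    set f : ℝ → ℝ := fun s => if s < r then t else 0 with hfdef
    have hnn : ∀ s ∈ Set.Ioi (0:ℝ), 0 ≤ f s := by
      intro s _; dsimp only [f]; split_ifs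
      · exact ht0'.le
      · exact le_refl 0
    have hanti : AntitoneOn f (Set.Ioi 0) := by
      intro s _ s' _ hss'
      dsimp only [f]; split_ifs with h1 h2 <;> first | exact le_refl _ | linarith
    have hmain := h f hnn hanti
    have hint : ∀ (Y : YoungFunction) (l : ℝ≥0∞) (q : ℝ),
        ∫⁻ s in Set.Ioi q, Y.toFun (ENNReal.ofReal (f s) / l)
          = Y.toFun (ENNReal.ofReal t / l) * ENNReal.ofReal (r - q) := by
      intro Y l q
      have heq : ∀ s : ℝ, Y.toFun (ENNReal.ofReal (f s) / l)
          = if s < r then Y.toFun (ENNReal.ofReal t / l) else 0 := by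
        intro s; dsimp only [f]; split_ifs <;>
          simp [Y.zero', ENNReal.zero_div]
      rw [lintegral_congr heq, lint_if]
    have hA : luxNorm A (Set.Ioi 0) (fun s => ENNReal.ofReal (f s)) ≤ ENNReal.ofReal (1/c) := by
      apply sInf_le
      refine ⟨ENNReal.ofReal_pos.mpr (by positivity), ?_⟩
      rw [hint A]
      have hdiv : ENNReal.ofReal t / ENNReal.ofReal (1/c) = ENNReal.ofReal (c * t) := by
        rw [← ENNReal.ofReal_div_of_pos (by positivity)]
        congr 1; field_simp
      rw [hdiv, sub_zero, ← hadef, mul_comm]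
      exact hra
    have hB : luxNorm B (Set.Ioi 1) (fun s => ENNReal.ofReal (f s)) < ENNReal.ofReal (1/2) := by
      refine lt_of_le_of_lt (hmain.trans (mul_le_mul_right hA _)) ?_
      have : (C : ℝ≥0∞) * ENNReal.ofReal (1/c) = ENNReal.ofReal ((C:ℝ) * (1/c)) := by
        rw [ENNReal.ofReal_mul C.coe_nonneg, ENNReal.ofReal_coe_nnreal]
      rw [this]
      apply (ENNReal.ofReal_lt_ofReal_iff (by norm_num)).mpr
      rw [hcdef]
      rw [mul_one_div, div_lt_iff₀ (by positivity)]
      nlinarith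
    rw [luxNorm] at hB
    obtain ⟨l, hl, hllt⟩ := sInf_lt_iff.mp hB
    simp only [Set.mem_setOf_eq] at hl
    obtain ⟨hl0, hlint⟩ := hl
    rw [hint B] at hlint
    have h2t : ENNReal.ofReal (2 * t) ≤ ENNReal.ofReal t / l := by
      have he : ENNReal.ofReal (2 * t) = ENNReal.ofReal t / ENNReal.ofReal (1/2) := by
        rw [← ENNReal.ofReal_div_of_pos (by norm_num)]
        congr 1; field_simp
      rw [he]
      exact ENNReal.div_le_div_left (le_of_lt hllt) _
    have hr1 : (0:ℝ) < r - 1 := by linarith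
    have hBle : B.toFun (ENNReal.ofReal t / l) ≤ 1 / ENNReal.ofReal (r - 1) := by
      rw [ENNReal.le_div_iff_mul_le (Or.inl (by simpa using hr1)) (Or.inl ENNReal.ofReal_ne_top)]
      exact hlint
    have hfin : (1:ℝ≥0∞) / ENNReal.ofReal (r - 1) ≤ ENNReal.ofReal (2 / r) := by
      rw [one_div, ← ENNReal.ofReal_inv_of_pos hr1]
      apply ENNReal.ofReal_le_ofReal
      rw [inv_le_iff_one_le_mul₀ hr1, div_mul_eq_mul_div, le_div_iff₀ (by linarith)]
      linarith
    exact (B.mono' h2t).trans (hBle.trans hfin)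
  by_cases ha0 : a = 0
  · -- B(2t) = 0 case
    have hall : ∀ r : ℝ, 2 ≤ r → B.toFun (ENNReal.ofReal (2 * t)) ≤ ENNReal.ofReal (2 / r) := by
      intro r hr; exact key r hr (by rw [ha0, mul_zero]; exact zero_le_one)
    have hB2t : B.toFun (ENNReal.ofReal (2 * t)) = 0 := by
      refine le_antisymm ?_ zero_le
      have htend : Filter.Tendsto (fun r : ℝ => ENNReal.ofReal (2 / r)) Filter.atTop (nhds 0) := by
        have h1 : Filter.Tendsto (fun r : ℝ => 2 / r) Filter.atTop (nhds 0) :=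
          tendsto_const_nhds.div_atTop Filter.tendsto_id
        simpa [Function.comp_def] using (ENNReal.continuous_ofReal.tendsto 0).comp h1
      exact ge_of_tendsto htend (Filter.eventually_atTop.mpr ⟨2, hall⟩)
    have : B.toFun (ENNReal.ofReal t) ≤ B.toFun (ENNReal.ofReal (2 * t)) :=
      B.mono' (ENNReal.ofReal_le_ofReal (by linarith))
    rw [hB2t] at this
    exact le_trans this zero_le
  · have hatop : a ≠ ⊤ := ne_top_of_le_ne_top ENNReal.ofReal_ne_top hact
    set r : ℝ := (a⁻¹).toReal with hrdef
    have hainv : a⁻¹ ≠ ⊤ := ENNReal.inv_ne_top.mpr ha0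
    have har : ENNReal.ofReal r = a⁻¹ := ENNReal.ofReal_toReal hainv
    have hr2 : 2 ≤ r := by
      have h2inv : (2:ℝ≥0∞) ≤ a⁻¹ := by
        rw [ENNReal.le_inv_iff_mul_le]
        calc (2:ℝ≥0∞) * a ≤ 2 * ENNReal.ofReal (1/2) := mul_le_mul_right hact 2
          _ = 1 := by
              rw [show (2:ℝ≥0∞) = ENNReal.ofReal 2 by simp, ← ENNReal.ofReal_mul (by norm_num)]
              norm_num
      have := ENNReal.toReal_mono hainv h2inv
      show (2:ℝ) ≤ (a⁻¹).toReal
      simpa using this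
    have hra : ENNReal.ofReal r * a ≤ 1 := by
      rw [har, ENNReal.inv_mul_cancel ha0 hatop]
    have hk := key r hr2 hra
    have h2r : ENNReal.ofReal (2 / r) = 2 * a := by
      rw [ENNReal.ofReal_div_of_pos (by linarith), har, div_eq_mul_inv, inv_inv]
      congr 1; simp
    rw [h2r] at hk
    have hhalf : B.toFun (ENNReal.ofReal t) ≤ ENNReal.ofReal (1/2) * B.toFun (ENNReal.ofReal (2 * t)) := by
      have hcv := B.convex' (ENNReal.ofReal (2 * t)) 0 (1/2) (by norm_num) (by norm_num)
      simp only [mul_zero, add_zero, B.zero'] at hcv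
      have hpt : ENNReal.ofReal (1/2) * ENNReal.ofReal (2 * t) = ENNReal.ofReal t := by
        rw [← ENNReal.ofReal_mul (by norm_num)]; congr 1; ring
      rw [hpt] at hcv
      exact hcv
    calc B.toFun (ENNReal.ofReal t) ≤ ENNReal.ofReal (1/2) * (2 * a) :=
          hhalf.trans (mul_le_mul_right hk _)
      _ = a := by
          rw [← mul_assoc, show (2:ℝ≥0∞) = ENNReal.ofReal 2 by simp,
            ← ENNReal.ofReal_mul (by norm_num)]
          norm_num
end
end

section
/- For m < n, 1 ≤ p < n/m, and f : (0,∞) → [0,∞) non-increasing, the weighted Hardy-type inequality holds: ‖χ_{(0,1)}(s) ∫_s^1 f(r) r^{−1+m/n} dr‖_{L^{np/(n−mp), p}(0,∞)} ≤ C ‖χ_{(0,1)} f‖_{L^{p,p}(0,∞)} for some constant C independent of f, where ‖g‖_{L^{q,p}} = ‖g*(s) s^{1/q − 1/p}‖_{L^p}. -/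
/-!
Write `a = m/n`, so `a p < 1`. The function `χ_{(0,1)}(s) ∫_s^1 f(r) r^{a-1} dr` is non-increasing,
hence dominates its own rearrangement, and the left-hand side is at most the weighted Hardy integral
`(∫_0^1 (∫_s^1 f(r) r^{a-1} dr)^p s^{-ap} ds)^{1/p}`. For `p = 1` Fubini evaluates this integral as
`(1 - a)⁻¹ ∫_0^1 f`. For `p > 1`, Hölder's inequality applied to the splitting
`f(r) r^{a-1} = (f(r) r^{-ε/p}) · r^{a-1+ε/p}` with `0 < ε < 1 - a p` and then Fubini bound it by a
multiple of `∫_0^1 f^p`. On the right, `h = χ_{(0,1)} f` is non-increasing, so `h*(s) ≥ h(2s)`, and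
`‖h‖_{L^p}^p ≤ 2 ‖h‖_{L^{p,p}}^p`.
-/

open MeasureTheory Set
open scoped ENNReal NNReal

noncomputable section

/-- The Lorentz functional `‖g‖_{L^{q,p}(0,∞)} = ‖g*(s) s^{1/q − 1/p}‖_{L^p(0,∞)}`. -/
def lorentzNorm (q p : ℝ) (g : ℝ → ℝ≥0∞) : ℝ≥0∞ :=
  (∫⁻ s in Set.Ioi (0:ℝ),
      (rearr (volume.restrict (Set.Ioi (0:ℝ))) g s) ^ p * ENNReal.ofReal (s ^ (p / q - 1))) ^
    (1 / p)

lemma lintegral_Ioo_rpow {c r : ℝ} (hc : -1 < c) (hr : 0 ≤ r) :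
    ∫⁻ x in Ioo 0 r, ENNReal.ofReal (x ^ c) = ENNReal.ofReal (r ^ (c + 1) / (c + 1)) := by
  have hint : IntegrableOn (fun x : ℝ => x ^ c) (Ioc 0 r) :=
    (intervalIntegrable_iff_integrableOn_Ioc_of_le hr).1
      (intervalIntegral.intervalIntegrable_rpow' hc)
  have hprim : r ^ (c + 1) / (c + 1) = ∫ x in 0..r, x ^ c := by
    rw [integral_rpow (Or.inl hc), Real.zero_rpow (by linarith), sub_zero]
  rw [hprim, intervalIntegral.integral_of_le hr, integral_Ioc_eq_integral_Ioo,
    ofReal_integral_eq_lintegral_ofReal (hint.mono_set Ioo_subset_Ioc_self)]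
  filter_upwards [ae_restrict_mem measurableSet_Ioo] with x hx
  exact Real.rpow_nonneg hx.1.le c

lemma lintegral_Ioi_rpow {c s : ℝ} (hc : c < -1) (hs : 0 < s) :
    ∫⁻ x in Ioi s, ENNReal.ofReal (x ^ c) = ENNReal.ofReal (s ^ (c + 1) / -(c + 1)) := by
  rw [div_neg, ← neg_div, ← integral_Ioi_rpow_of_lt hc hs,
    ofReal_integral_eq_lintegral_ofReal (integrableOn_Ioi_rpow_of_lt hc hs)]
  filter_upwards [ae_restrict_mem measurableSet_Ioi] with x hx
  exact Real.rpow_nonneg (hs.trans hx).le c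

lemma lintegral_Ioo_lintegral_Ioo_swap {a b : ℝ} {G w : ℝ → ℝ≥0∞}
    (hG : AEMeasurable G (volume.restrict (Ioo a b)))
    (hw : AEMeasurable w (volume.restrict (Ioo a b))) :
    ∫⁻ s in Ioo a b, (∫⁻ r in Ioo s b, G r) * w s =
      ∫⁻ r in Ioo a b, G r * ∫⁻ s in Ioo a r, w s := by
  set T : ℝ → ℝ → ℝ≥0∞ := fun s r =>
    {z : ℝ × ℝ | z.1 < z.2}.indicator (fun z => G z.2 * w z.1) (s, r)
  have hT : AEMeasurable (Function.uncurry T)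
      ((volume.restrict (Ioo a b)).prod (volume.restrict (Ioo a b))) :=
    (hG.comp_snd.mul hw.comp_fst).indicator (measurableSet_lt measurable_fst measurable_snd)
  have inner_r : ∀ s ∈ Ioo a b, (∫⁻ r in Ioo s b, G r) * w s = ∫⁻ r in Ioo a b, T s r := by
    intro s hs
    have hGs := hG.mono_measure (Measure.restrict_mono (Ioo_subset_Ioo_left hs.1.le) le_rfl)
    rw [← lintegral_mul_const'' _ hGs,
      show Ioo s b = Ioi s ∩ Ioo a b by rw [Ioi_inter_Ioo, max_eq_left hs.1.le],
      ← Measure.restrict_restrict measurableSet_Ioi, ← lintegral_indicator measurableSet_Ioi]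
    rfl
  have inner_s : ∀ r ∈ Ioo a b, G r * ∫⁻ s in Ioo a r, w s = ∫⁻ s in Ioo a b, T s r := by
    intro r hr
    have hwr := hw.mono_measure (Measure.restrict_mono (Ioo_subset_Ioo_right hr.2.le) le_rfl)
    rw [← lintegral_const_mul'' _ hwr,
      show Ioo a r = Iio r ∩ Ioo a b by rw [Iio_inter_Ioo, min_eq_left hr.2.le],
      ← Measure.restrict_restrict measurableSet_Iio, ← lintegral_indicator measurableSet_Iio]
    rfl
  rw [setLIntegral_congr_fun measurableSet_Ioo inner_r, lintegral_lintegral_swap hT,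
    setLIntegral_congr_fun measurableSet_Ioo inner_s]

lemma lintegral_Ioo_lintegral_Ioo_mul_rpow {γ : ℝ} (hγ : -1 < γ) {G : ℝ → ℝ≥0∞}
    (hG : AEMeasurable G (volume.restrict (Ioo 0 1))) :
    ∫⁻ s in Ioo 0 1, (∫⁻ r in Ioo s 1, G r) * ENNReal.ofReal (s ^ γ) =
      ∫⁻ r in Ioo 0 1, G r * ENNReal.ofReal (r ^ (γ + 1) / (γ + 1)) := by
  rw [lintegral_Ioo_lintegral_Ioo_swap hG (by fun_prop)]
  exact setLIntegral_congr_fun measurableSet_Ioo fun r hr => by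
    rw [lintegral_Ioo_rpow hγ hr.1.le]

lemma rpow_lintegral_Ioo_le {p a ε s : ℝ} (hp : 1 < p) (haε : a * p + ε < 1) (hs : 0 < s)
    {H : ℝ → ℝ≥0∞} (hH : AEMeasurable H (volume.restrict (Ioo s 1))) :
    (∫⁻ r in Ioo s 1, H r * ENNReal.ofReal (r ^ (a - 1))) ^ p ≤
      ENNReal.ofReal (((p - 1) / (1 - a * p - ε)) ^ (p - 1) * s ^ (a * p + ε - 1)) *
        ∫⁻ r in Ioo s 1, H r ^ p * ENNReal.ofReal (r ^ (-ε)) := by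
  have hp0 : 0 < p := one_pos.trans hp
  have hp1 : 0 < p - 1 := sub_pos.2 hp
  set q := p / (p - 1)
  have hpq : p.HolderConjugate q := Real.HolderConjugate.conjExponent hp
  -- `c = (a - 1 + ε/p) q` is the exponent of the second Hölder factor raised to the power `q`.
  set c := (a * p + ε - 1) / (p - 1) - 1
  have hc : c < -1 := by
    have : (a * p + ε - 1) / (p - 1) < 0 := div_neg_of_neg_of_pos (by linarith) hp1
    linarith
  set u : ℝ → ℝ≥0∞ := fun r => H r * ENNReal.ofReal (r ^ (-ε / p))
  set v : ℝ → ℝ≥0∞ := fun r => ENNReal.ofReal (r ^ (a - 1 + ε / p))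
  have huv : ∀ r ∈ Ioo s 1, H r * ENNReal.ofReal (r ^ (a - 1)) = (u * v) r := by
    intro r hr
    have hr0 : 0 < r := hs.trans hr.1
    simp only [u, v, Pi.mul_apply, mul_assoc, ← ENNReal.ofReal_mul (Real.rpow_nonneg hr0.le _),
      ← Real.rpow_add hr0]
    ring_nf
  have hu : ∀ r ∈ Ioo s 1, u r ^ p = H r ^ p * ENNReal.ofReal (r ^ (-ε)) := by
    intro r hr
    have hr0 : 0 < r := hs.trans hr.1
    rw [ENNReal.mul_rpow_of_nonneg _ _ hp0.le,
      ENNReal.ofReal_rpow_of_nonneg (Real.rpow_nonneg hr0.le _) hp0.le, ← Real.rpow_mul hr0.le,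
      div_mul_cancel₀ _ hp0.ne']
  have hv : ∀ r ∈ Ioo s 1, v r ^ q = ENNReal.ofReal (r ^ c) := by
    intro r hr
    have hr0 : 0 < r := hs.trans hr.1
    rw [ENNReal.ofReal_rpow_of_nonneg (Real.rpow_nonneg hr0.le _) hpq.symm.nonneg,
      ← Real.rpow_mul hr0.le]
    congr 2
    simp only [q, c]
    field_simp
    ring
  have holder : ∫⁻ r in Ioo s 1, H r * ENNReal.ofReal (r ^ (a - 1)) ≤
      (∫⁻ r in Ioo s 1, H r ^ p * ENNReal.ofReal (r ^ (-ε))) ^ (1 / p) *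
        (∫⁻ r in Ioo s 1, ENNReal.ofReal (r ^ c)) ^ (1 / q) := by
    rw [setLIntegral_congr_fun measurableSet_Ioo huv,
      ← setLIntegral_congr_fun measurableSet_Ioo hu, ← setLIntegral_congr_fun measurableSet_Ioo hv]
    exact ENNReal.lintegral_mul_le_Lp_mul_Lq _ hpq (hH.mul (by fun_prop)) (by fun_prop)
  have tail : ∫⁻ r in Ioo s 1, ENNReal.ofReal (r ^ c) ≤
      ENNReal.ofReal (s ^ (c + 1) / -(c + 1)) :=
    (lintegral_mono_set Ioo_subset_Ioi_self).trans (lintegral_Ioi_rpow hc hs).le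
  have hconst : (s ^ (c + 1) / -(c + 1)) ^ (p - 1) =
      ((p - 1) / (1 - a * p - ε)) ^ (p - 1) * s ^ (a * p + ε - 1) := by
    have hneg : -(c + 1) = (1 - a * p - ε) / (p - 1) := by
      simp only [c]; field_simp; ring
    have hδ : 0 < 1 - a * p - ε := by linarith
    rw [hneg, show s ^ (c + 1) / ((1 - a * p - ε) / (p - 1)) =
        (p - 1) / (1 - a * p - ε) * s ^ (c + 1) by field_simp,
      Real.mul_rpow (by positivity) (by positivity), ← Real.rpow_mul hs.le]
    congr 2
    simp only [c]
    field_simp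
    ring
  calc (∫⁻ r in Ioo s 1, H r * ENNReal.ofReal (r ^ (a - 1))) ^ p
      ≤ ((∫⁻ r in Ioo s 1, H r ^ p * ENNReal.ofReal (r ^ (-ε))) ^ (1 / p) *
          (∫⁻ r in Ioo s 1, ENNReal.ofReal (r ^ c)) ^ (1 / q)) ^ p := by gcongr
    _ = (∫⁻ r in Ioo s 1, H r ^ p * ENNReal.ofReal (r ^ (-ε))) *
          (∫⁻ r in Ioo s 1, ENNReal.ofReal (r ^ c)) ^ (p - 1) := by
      rw [ENNReal.mul_rpow_of_nonneg _ _ hp0.le, ← ENNReal.rpow_mul, ← ENNReal.rpow_mul,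
        one_div_mul_cancel hp0.ne', ENNReal.rpow_one]
      congr 2
      simp only [q]
      field_simp
    _ ≤ (∫⁻ r in Ioo s 1, H r ^ p * ENNReal.ofReal (r ^ (-ε))) *
          ENNReal.ofReal (s ^ (c + 1) / -(c + 1)) ^ (p - 1) := by gcongr
    _ = _ := by
      rw [ENNReal.ofReal_rpow_of_nonneg (div_nonneg (by positivity) (by linarith)) hp1.le,
        hconst, mul_comm]

lemma hardy_inequality_one {a : ℝ} (ha : a < 1) {H : ℝ → ℝ≥0∞}
    (hH : AEMeasurable H (volume.restrict (Ioo 0 1))) :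
    ∫⁻ s in Ioo 0 1,
        (∫⁻ r in Ioo s 1, H r * ENNReal.ofReal (r ^ (a - 1))) * ENNReal.ofReal (s ^ (-a)) =
      ENNReal.ofReal (1 / (1 - a)) * ∫⁻ r in Ioo 0 1, H r := by
  rw [lintegral_Ioo_lintegral_Ioo_mul_rpow (G := fun r => H r * ENNReal.ofReal (r ^ (a - 1)))
      (by linarith) (hH.mul (by fun_prop)),
    ← lintegral_const_mul' _ _ ENNReal.ofReal_ne_top]
  refine setLIntegral_congr_fun measurableSet_Ioo fun r hr => ?_
  rw [mul_assoc, ← ENNReal.ofReal_mul (Real.rpow_nonneg hr.1.le _), ← mul_div_assoc,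
    ← Real.rpow_add hr.1, show a - 1 + (-a + 1) = 0 by ring, Real.rpow_zero,
    show -a + 1 = 1 - a by ring, mul_comm]

lemma hardy_inequality_of_one_lt {p a ε : ℝ} (hp : 1 < p) (hε : 0 < ε) (haε : a * p + ε < 1)
    {H : ℝ → ℝ≥0∞} (hH : AEMeasurable H (volume.restrict (Ioo 0 1))) :
    ∫⁻ s in Ioo 0 1, (∫⁻ r in Ioo s 1, H r * ENNReal.ofReal (r ^ (a - 1))) ^ p *
        ENNReal.ofReal (s ^ (-(a * p))) ≤
      ENNReal.ofReal (((p - 1) / (1 - a * p - ε)) ^ (p - 1) / ε) * ∫⁻ r in Ioo 0 1, H r ^ p := by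
  set K := ((p - 1) / (1 - a * p - ε)) ^ (p - 1)
  have hK : 0 ≤ K := Real.rpow_nonneg (div_nonneg (by linarith) (by linarith)) _
  have pointwise : ∀ s ∈ Ioo (0 : ℝ) 1,
      (∫⁻ r in Ioo s 1, H r * ENNReal.ofReal (r ^ (a - 1))) ^ p *
          ENNReal.ofReal (s ^ (-(a * p))) ≤
        ENNReal.ofReal K * ((∫⁻ r in Ioo s 1, H r ^ p * ENNReal.ofReal (r ^ (-ε))) *
          ENNReal.ofReal (s ^ (ε - 1))) := by
    intro s hs
    have hexp : ENNReal.ofReal (s ^ (a * p + ε - 1)) * ENNReal.ofReal (s ^ (-(a * p))) =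
        ENNReal.ofReal (s ^ (ε - 1)) := by
      rw [← ENNReal.ofReal_mul (Real.rpow_nonneg hs.1.le _), ← Real.rpow_add hs.1]
      ring_nf
    calc _ ≤ ENNReal.ofReal (K * s ^ (a * p + ε - 1)) *
            (∫⁻ r in Ioo s 1, H r ^ p * ENNReal.ofReal (r ^ (-ε))) *
              ENNReal.ofReal (s ^ (-(a * p))) := by
          gcongr
          exact rpow_lintegral_Ioo_le hp haε hs.1
            (hH.mono_measure (Measure.restrict_mono (Ioo_subset_Ioo_left hs.1.le) le_rfl))
      _ = _ := by
        rw [ENNReal.ofReal_mul hK, ← hexp]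
        ring
  calc _ ≤ ∫⁻ s in Ioo 0 1, ENNReal.ofReal K *
          ((∫⁻ r in Ioo s 1, H r ^ p * ENNReal.ofReal (r ^ (-ε))) *
            ENNReal.ofReal (s ^ (ε - 1))) :=
        setLIntegral_mono' measurableSet_Ioo pointwise
    _ = ENNReal.ofReal K * ∫⁻ r in Ioo 0 1, ENNReal.ofReal (1 / ε) * H r ^ p := by
      rw [lintegral_const_mul' _ _ ENNReal.ofReal_ne_top,
        lintegral_Ioo_lintegral_Ioo_mul_rpow (G := fun r => H r ^ p * ENNReal.ofReal (r ^ (-ε)))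
          (by linarith) ((hH.pow_const p).mul (by fun_prop))]
      congr 1
      refine setLIntegral_congr_fun measurableSet_Ioo fun r hr => ?_
      rw [mul_assoc, ← ENNReal.ofReal_mul (Real.rpow_nonneg hr.1.le _), ← mul_div_assoc,
        ← Real.rpow_add hr.1, show -ε + (ε - 1 + 1) = 0 by ring, Real.rpow_zero,
        show ε - 1 + 1 = ε by ring, mul_comm]
    _ = _ := by
      rw [lintegral_const_mul' _ _ ENNReal.ofReal_ne_top, ← mul_assoc, ← ENNReal.ofReal_mul hK,
        mul_one_div]

lemma hardy_inequality {p a : ℝ} (hp : 1 ≤ p) (hap : a * p < 1) :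
    ∃ C : ℝ≥0, ∀ H : ℝ → ℝ≥0∞, AEMeasurable H (volume.restrict (Ioo 0 1)) →
      ∫⁻ s in Ioo 0 1, (∫⁻ r in Ioo s 1, H r * ENNReal.ofReal (r ^ (a - 1))) ^ p *
          ENNReal.ofReal (s ^ (-(a * p))) ≤
        C * ∫⁻ r in Ioo 0 1, H r ^ p := by
  rcases hp.eq_or_lt with rfl | hp
  · refine ⟨(1 / (1 - a)).toNNReal, fun H hH => ?_⟩
    simp only [ENNReal.rpow_one, mul_one]
    exact (hardy_inequality_one (by linarith) hH).le
  · refine ⟨(((p - 1) / (1 - a * p - (1 - a * p) / 2)) ^ (p - 1) / ((1 - a * p) / 2)).toNNReal,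
      fun H hH => hardy_inequality_of_one_lt hp (by linarith) (by linarith) hH⟩

lemma rearr_le_of_antitoneOn {g : ℝ → ℝ≥0∞} (hg : AntitoneOn g (Ioi 0)) {s : ℝ} (hs : 0 < s) :
    rearr (volume.restrict (Ioi 0)) g s ≤ g s := by
  refine sInf_le (show volume.restrict (Ioi 0) {x | g s < g x} ≤ ENNReal.ofReal s from ?_)
  have hsub : {x | g s < g x} ∩ Ioi 0 ⊆ Ioo 0 s := fun x ⟨hx, hx0⟩ =>
    ⟨hx0, lt_of_not_ge fun hsx => (hg hs hx0 hsx).not_gt hx⟩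
  calc volume.restrict (Ioi 0) {x | g s < g x} = volume ({x | g s < g x} ∩ Ioi 0) :=
        Measure.restrict_apply' measurableSet_Ioi
    _ ≤ volume (Ioo 0 s) := measure_mono hsub
    _ = ENNReal.ofReal s := by rw [Real.volume_Ioo, sub_zero]

lemma le_rearr_of_antitoneOn {g : ℝ → ℝ≥0∞} (hg : AntitoneOn g (Ioi 0)) {s t : ℝ} (hs : 0 < s)
    (hst : s < t) : g t ≤ rearr (volume.restrict (Ioi 0)) g s := by
  refine le_sInf fun u (hu : volume.restrict (Ioi 0) {x | u < g x} ≤ ENNReal.ofReal s) => ?_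
  refine le_of_not_gt fun hut => hst.not_ge ((ENNReal.ofReal_le_ofReal_iff hs.le).1 ?_)
  calc ENNReal.ofReal t = volume.restrict (Ioi 0) (Ioo 0 t) := by
        rw [Measure.restrict_apply measurableSet_Ioo, inter_eq_left.2 Ioo_subset_Ioi_self,
          Real.volume_Ioo, sub_zero]
    _ ≤ volume.restrict (Ioi 0) {x | u < g x} :=
        measure_mono fun x hx => hut.trans_le (hg hx.1 (hs.trans hst) hx.2.le)
    _ ≤ ENNReal.ofReal s := hu

lemma lorentzNorm_le_of_antitoneOn {q p : ℝ} (hp : 0 < p) {g : ℝ → ℝ≥0∞}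
    (hg : AntitoneOn g (Ioi 0)) :
    lorentzNorm q p g ≤ (∫⁻ s in Ioi 0, g s ^ p * ENNReal.ofReal (s ^ (p / q - 1))) ^ (1 / p) := by
  refine ENNReal.rpow_le_rpow (setLIntegral_mono' measurableSet_Ioi fun s hs => ?_) (by positivity)
  gcongr
  exact rearr_le_of_antitoneOn hg hs

lemma lorentzNorm_self_rpow {p : ℝ} (hp : p ≠ 0) (g : ℝ → ℝ≥0∞) :
    lorentzNorm p p g ^ p = ∫⁻ s in Ioi 0, rearr (volume.restrict (Ioi 0)) g s ^ p := by
  simp only [lorentzNorm, div_self hp, sub_self, Real.rpow_zero, ENNReal.ofReal_one, mul_one]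
  rw [← ENNReal.rpow_mul, one_div_mul_cancel hp, ENNReal.rpow_one]

lemma lintegral_Ioi_comp_two_mul (φ : ℝ → ℝ≥0∞) :
    ∫⁻ s in Ioi 0, φ (2 * s) = 2⁻¹ * ∫⁻ s in Ioi 0, φ s := by
  have he : MeasurableEmbedding fun s : ℝ => 2 * s :=
    (Homeomorph.mulLeft₀ (2 : ℝ) two_ne_zero).measurableEmbedding
  have hpre : (fun s : ℝ => 2 * s) ⁻¹' Ioi 0 = Ioi 0 := by
    ext s; simp only [mem_preimage, mem_Ioi]; constructor <;> intro h <;> linarith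
  rw [← hpre, ← he.lintegral_map, ← he.restrict_map, Real.map_volume_mul_left two_ne_zero,
    Measure.restrict_smul, lintegral_smul_measure, hpre, smul_eq_mul,
    abs_of_pos (by norm_num : (0 : ℝ) < 2⁻¹), ENNReal.ofReal_inv_of_pos two_pos,
    ENNReal.ofReal_ofNat]

lemma lintegral_rpow_le_two_mul_lorentzNorm {p : ℝ} (hp : 0 < p) {h : ℝ → ℝ≥0∞}
    (hh : AntitoneOn h (Ioi 0)) : ∫⁻ s in Ioi 0, h s ^ p ≤ 2 * lorentzNorm p p h ^ p := by
  rw [lorentzNorm_self_rpow hp.ne']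
  calc ∫⁻ s in Ioi 0, h s ^ p = 2 * ∫⁻ s in Ioi 0, h (2 * s) ^ p := by
        rw [lintegral_Ioi_comp_two_mul (fun s => h s ^ p), ← mul_assoc,
          ENNReal.mul_inv_cancel two_ne_zero ENNReal.ofNat_ne_top, one_mul]
    _ ≤ 2 * ∫⁻ s in Ioi 0, rearr (volume.restrict (Ioi 0)) h s ^ p := by
        gcongr 2 * ?_
        refine setLIntegral_mono' measurableSet_Ioi fun s (hs : 0 < s) => ?_
        gcongr
        exact le_rearr_of_antitoneOn hh hs (by linarith)

lemma AntitoneOn.indicator_Ioo {α : Type*} [LinearOrder α] {a b : α} {u : α → ℝ≥0∞}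
    (hu : AntitoneOn u (Ioo a b)) : AntitoneOn ((Ioo a b).indicator u) (Ioi a) := by
  intro x hx y hy hxy
  by_cases hyb : y < b
  · have hxI : x ∈ Ioo a b := ⟨hx, hxy.trans_lt hyb⟩
    have hyI : y ∈ Ioo a b := ⟨hy, hyb⟩
    rw [indicator_of_mem hxI, indicator_of_mem hyI]
    exact hu hxI hyI hxy
  · rw [indicator_of_notMem fun h : y ∈ Ioo a b => hyb h.2]
    exact zero_le

lemma lintegral_Ioi_indicator_Ioo_rpow_mul {p : ℝ} (hp : 0 < p) (u w : ℝ → ℝ≥0∞) :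
    ∫⁻ s in Ioi 0, (Ioo 0 1).indicator u s ^ p * w s = ∫⁻ s in Ioo 0 1, u s ^ p * w s := by
  have hind : ∀ s, (Ioo 0 1).indicator u s ^ p * w s =
      (Ioo 0 1).indicator (fun s => u s ^ p * w s) s := by
    intro s
    by_cases hs : s ∈ Ioo (0 : ℝ) 1
    · simp only [indicator_of_mem hs]
    · simp only [indicator_of_notMem hs, ENNReal.zero_rpow_of_pos hp, zero_mul]
  simp_rw [hind]
  rw [lintegral_indicator measurableSet_Ioo, Measure.restrict_restrict measurableSet_Ioo,
    inter_eq_left.2 Ioo_subset_Ioi_self]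

/-- For `m < n`, `1 ≤ p < n/m` and non-increasing `f : (0,∞) → [0,∞)`,
`‖χ_{(0,1)}(s) ∫_s^1 f(r) r^{−1+m/n} dr‖_{L^{np/(n−mp),p}} ≤ C ‖χ_{(0,1)} f‖_{L^{p,p}}`
with `C` independent of `f`. -/
theorem lorentz_reduction_inequality (m n : ℕ) (hm : 0 < m) (hmn : m < n)
    (p : ℝ) (hp1 : 1 ≤ p) (hp2 : p < (n:ℝ) / (m:ℝ)) :
    ∃ C : ℝ≥0, ∀ f : ℝ → ℝ, (∀ s ∈ Set.Ioi (0:ℝ), 0 ≤ f s) → AntitoneOn f (Set.Ioi 0) →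
      lorentzNorm ((n:ℝ) * p / ((n:ℝ) - (m:ℝ) * p)) p
          ((Set.Ioo (0:ℝ) 1).indicator
            (fun s => ∫⁻ r in Set.Ioo s 1, ENNReal.ofReal (f r * r ^ ((m:ℝ)/(n:ℝ) - 1)))) ≤
        (C : ℝ≥0∞) * lorentzNorm p p
          ((Set.Ioo (0:ℝ) 1).indicator (fun s => ENNReal.ofReal (f s))) := by
  have hp0 : 0 < p := one_pos.trans_le hp1
  have hm0 : (0 : ℝ) < m := Nat.cast_pos.2 hm
  have hn0 : (0 : ℝ) < n := Nat.cast_pos.2 (hm.trans hmn)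
  have hexp : p / (n * p / (n - m * p)) - 1 = -((m : ℝ) / n * p) := by
    field_simp
    ring
  set a : ℝ := m / n
  have hap : a * p < 1 := by
    rw [div_mul_eq_mul_div, div_lt_one hn0]
    rwa [lt_div_iff₀ hm0, mul_comm] at hp2
  obtain ⟨C, hC⟩ := hardy_inequality hp1 hap
  refine ⟨C ^ (1 / p) * 2 ^ (1 / p), fun f hf0 hf => ?_⟩
  set h := (Ioo 0 1).indicator fun s => ENNReal.ofReal (f s)
  have hF : AntitoneOn (fun s => ENNReal.ofReal (f s)) (Ioo 0 1) :=
    ENNReal.ofReal_mono.comp_antitoneOn (hf.mono Ioo_subset_Ioi_self)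
  have hG : AntitoneOn (fun s => ∫⁻ r in Ioo s 1, ENNReal.ofReal (f r * r ^ (a - 1))) (Ioo 0 1) :=
    fun x _ y _ hxy => lintegral_mono_set (Ioo_subset_Ioo_left hxy)
  have hLp : ∫⁻ s in Ioo 0 1, ENNReal.ofReal (f s) ^ p = ∫⁻ s in Ioi 0, h s ^ p := by
    simpa only [Pi.one_apply, mul_one] using
      (lintegral_Ioi_indicator_Ioo_rpow_mul hp0 (fun s => ENNReal.ofReal (f s)) 1).symm
  calc _ ≤ _ := lorentzNorm_le_of_antitoneOn hp0 hG.indicator_Ioo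
    _ = (∫⁻ s in Ioo 0 1, (∫⁻ r in Ioo s 1, ENNReal.ofReal (f r) * ENNReal.ofReal (r ^ (a - 1))) ^ p
          * ENNReal.ofReal (s ^ (-(a * p)))) ^ (1 / p) := by
      rw [hexp, lintegral_Ioi_indicator_Ioo_rpow_mul hp0]
      refine congrArg (· ^ (1 / p)) (setLIntegral_congr_fun measurableSet_Ioo fun s hs => ?_)
      rw [setLIntegral_congr_fun measurableSet_Ioo fun r hr =>
        ENNReal.ofReal_mul (hf0 r (hs.1.trans hr.1))]
    _ ≤ (C * ∫⁻ s in Ioo 0 1, ENNReal.ofReal (f s) ^ p) ^ (1 / p) := by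
      gcongr
      exact hC _ (aemeasurable_restrict_of_antitoneOn measurableSet_Ioo hF)
    _ ≤ (C * (2 * lorentzNorm p p h ^ p)) ^ (1 / p) := by
      rw [hLp]
      gcongr
      exact lintegral_rpow_le_two_mul_lorentzNorm hp0 hF.indicator_Ioo
    _ = _ := by
      rw [← mul_assoc, ENNReal.mul_rpow_of_nonneg _ _ (by positivity), ← ENNReal.rpow_mul,
        mul_one_div_cancel hp0.ne', ENNReal.rpow_one,
        ENNReal.mul_rpow_of_nonneg _ _ (by positivity),
        ENNReal.coe_mul, ENNReal.coe_rpow_of_nonneg _ (by positivity),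
        ENNReal.coe_rpow_of_nonneg _ (by positivity)]
      rfl
end
end
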